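/- arXiv:1612.06277 — 2 statements merged into one kernel-verified Lean document; each statement's English description precedes it below -/
import Mathlib

section
/- There exists T > 0 such that for every t ∈ [−T,0] and every ψ ∈ M the infimum 𝓤̂(t,ψ) = inf{ ∫_t^0 [ ½‖σ̇_s‖²_M − 𝓕̂(σ_s) ] ds + 𝓤̂₀(σ₀) : σ ∈ AC([t,0],M), σ_t = ψ } is attained, and the minimizing curve σ^{(t,ψ)} ∈ AC([t,0],M) is unique. -/
open MeasureTheory Set Filter Topology
open scoped ENNReal RealInnerProductSpace

noncomputable section

set_option maxHeartbeats 1000000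

namespace MFG

instance : Fact ((0:ℝ) < 1) := ⟨zero_lt_one⟩

/-- `ℝ^d` as a Euclidean (inner-product) space. -/
abbrev Rd (d : ℕ) := EuclideanSpace ℝ (Fin d)

/-- The half-open unit cube `[0,1)^d`. -/
def cube (d : ℕ) : Set (Rd d) := {x | ∀ i, 0 ≤ x i ∧ x i < 1}

/-- Lebesgue measure restricted to the cube `[0,1)^d`. -/
def cubeMeasure (d : ℕ) : Measure (Rd d) := volume.restrict (cube d)

/-- `M = L²([0,1)^d, ℝ^d)`. -/
abbrev Mspace (d : ℕ) := Lp (α := Rd d) (Rd d) 2 (cubeMeasure d)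

/-- The vector of `ℝ^d` with integer coordinates `z`. -/
def intVec {d : ℕ} (z : Fin d → ℤ) : Rd d :=
  (EuclideanSpace.equiv (Fin d) ℝ).symm fun i => (z i : ℝ)

/-- An element of `M` is integer-valued (i.e. belongs to `L²_ℤ`) if a.e. its values are
integer vectors. -/
def IsIntegerValued {d : ℕ} (z : Mspace d) : Prop :=
  ∀ᵐ x ∂(cubeMeasure d), ∃ k : Fin d → ℤ, z x = intVec k

/-- The group `H` of invertible bi-measurable maps of `[0,1)^d` preserving Lebesgue measure. -/
structure CubeAuto (d : ℕ) where
  toFun : Rd d → Rd d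
  invFun : Rd d → Rd d
  measurable_toFun : Measurable toFun
  measurable_invFun : Measurable invFun
  mapsTo : MapsTo toFun (cube d) (cube d)
  mapsTo_inv : MapsTo invFun (cube d) (cube d)
  leftInv : ∀ x ∈ cube d, invFun (toFun x) = x
  rightInv : ∀ x ∈ cube d, toFun (invFun x) = x
  measurePreserving : MeasurePreserving toFun (cubeMeasure d) (cubeMeasure d)

/-- Composition `ψ ∘ h` as an element of `M`. -/
def Mcomp {d : ℕ} (ψ : Mspace d) (h : CubeAuto d) : Mspace d :=
  Lp.compMeasurePreserving h.toFun h.measurePreserving ψ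

/-- `ℤ^d`-periodicity of a function on `ℝ^d`. -/
def IsPeriodicRd {d : ℕ} (f : Rd d → ℝ) : Prop :=
  ∀ (x : Rd d) (z : Fin d → ℤ), f (x + intVec z) = f x


/-- The data of the problem: a potential `φ` and final conditions `U⁰, U¹`, all of class `C³`
on the torus (i.e. `ℤ^d`-periodic on `ℝ^d`), with `φ` and `U¹` even. -/
structure GoodData (d : ℕ) where
  φ : Rd d → ℝ
  U0 : Rd d → ℝ
  U1 : Rd d → ℝ
  φ_smooth : ContDiff ℝ 3 φ
  U0_smooth : ContDiff ℝ 3 U0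
  U1_smooth : ContDiff ℝ 3 U1
  φ_periodic : IsPeriodicRd φ
  U0_periodic : IsPeriodicRd U0
  U1_periodic : IsPeriodicRd U1
  φ_even : ∀ x, φ (-x) = φ x
  U1_even : ∀ x, U1 (-x) = U1 x

/-- `𝓕̂(σ) = ½ ∫∫ φ(σ(x) − σ(y)) dx dy`. -/
def Fcal {d : ℕ} (D : GoodData d) (σ : Mspace d) : ℝ :=
  (1/2) * ∫ x, (∫ y, D.φ (σ x - σ y) ∂(cubeMeasure d)) ∂(cubeMeasure d)

/-- `𝓤̂₀(σ) = ∫∫ [U⁰(σ(x)) + ½U¹(σ(x)−σ(y))] dx dy`. -/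
def U0cal {d : ℕ} (D : GoodData d) (σ : Mspace d) : ℝ :=
  ∫ x, (D.U0 (σ x) + (1/2) * ∫ y, D.U1 (σ x - σ y) ∂(cubeMeasure d)) ∂(cubeMeasure d)

/-- `F̂(q,σ) = ∫ φ(q − σ(x)) dx`. -/
def Fhat {d : ℕ} (D : GoodData d) (q : Rd d) (σ : Mspace d) : ℝ :=
  ∫ x, D.φ (q - σ x) ∂(cubeMeasure d)

/-- `û₀(q,σ) = U⁰(q) + ∫ U¹(q − σ(x)) dx`. -/
def u0hat {d : ℕ} (D : GoodData d) (q : Rd d) (σ : Mspace d) : ℝ :=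
  D.U0 q + ∫ x, D.U1 (q - σ x) ∂(cubeMeasure d)

/-- Absolutely continuous curves `[a,b] → E` with square-integrable derivative `σ'`. -/
def IsACOn {E : Type*} [NormedAddCommGroup E] [NormedSpace ℝ E] [CompleteSpace E]
    (a b : ℝ) (σ σ' : ℝ → E) : Prop :=
  IntervalIntegrable σ' volume a b ∧
  IntervalIntegrable (fun s => ‖σ' s‖ ^ 2) volume a b ∧
  ∀ s ∈ Icc a b, σ s = σ a + ∫ u in a..s, σ' u

/-- The augmented action of a curve `σ` (with derivative `σ'`) on `[t,0]`. -/
def action {d : ℕ} (D : GoodData d) (t : ℝ) (σ σ' : ℝ → Mspace d) : ℝ :=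
  (∫ s in t..0, ((1:ℝ)/2 * ‖σ' s‖ ^ 2 - Fcal D (σ s))) + U0cal D (σ 0)

/-- The value function `𝓤̂(t,ψ)` on parametrizations. -/
def Uhat {d : ℕ} (D : GoodData d) (t : ℝ) (ψ : Mspace d) : ℝ :=
  sInf {A | ∃ σ σ' : ℝ → Mspace d, IsACOn t 0 σ σ' ∧ σ t = ψ ∧ A = action D t σ σ'}

/-- `σ` (with derivative `σ'`) minimizes the augmented action on `[t,0]` among absolutely
continuous curves starting at `ψ` at time `t`. -/
def IsMinimizer {d : ℕ} (D : GoodData d) (t : ℝ) (ψ : Mspace d) (σ σ' : ℝ → Mspace d) : Prop :=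
  IsACOn t 0 σ σ' ∧ σ t = ψ ∧
  ∀ η η' : ℝ → Mspace d, IsACOn t 0 η η' → η t = ψ →
    action D t σ σ' ≤ action D t η η'


/-- Encoding of the Hilbert space `H¹_M(−T,0)` as the (isometric) product `M × L²((−T,0),M)`:
an `H¹` curve corresponds to the pair (initial value, derivative), and the `H¹` norm
`‖σ_{−T}‖² + ∫‖σ̇‖²` is exactly the product Hilbert norm squared. -/
abbrev H1space (d : ℕ) (T : ℝ) :=
  Mspace d × (Lp (α := ℝ) (Mspace d) 2 (volume.restrict (Ioc (-T) (0:ℝ))))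

/-- The `d`-dimensional torus `𝕋^d = ℝ^d/ℤ^d`. -/
abbrev Td (d : ℕ) := Fin d → AddCircle (1:ℝ)

/-- The natural projection `π : ℝ^d → 𝕋^d`. -/
def torusProj {d : ℕ} (v : Rd d) : Td d := fun i => (v i : AddCircle (1:ℝ))

/-- The canonical lift `𝕋^d → [0,1)^d ⊆ ℝ^d`. -/
def liftTd {d : ℕ} (q : Td d) : Rd d :=
  (EuclideanSpace.equiv (Fin d) ℝ).symm fun i => ((AddCircle.equivIco 1 0 (q i) : Ico (0:ℝ) (0+1)) : ℝ)

/-- The law on `𝕋^d` of a parametrization `ψ ∈ M`, i.e. `(π∘ψ)_♯𝓛^d`. -/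
def lawTd {d : ℕ} (ψ : Mspace d) : Measure (Td d) :=
  (cubeMeasure d).map fun x => torusProj (ψ x)

/-- A Borel probability measure on `ℝ^d` with finite second moment, i.e. a member of `𝓟₂(ℝ^d)`. -/
def IsProb2 {d : ℕ} (μ : Measure (Rd d)) : Prop :=
  IsProbabilityMeasure μ ∧ Integrable (fun x => ‖x‖ ^ 2) μ

/-- `γ ∈ Γ(μ₁,μ₂)`: a coupling of `μ₁` and `μ₂`. -/
def IsCoupling {d : ℕ} (γ : Measure (Rd d × Rd d)) (μ₁ μ₂ : Measure (Rd d)) : Prop :=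
  IsProbabilityMeasure γ ∧ γ.map Prod.fst = μ₁ ∧ γ.map Prod.snd = μ₂

/-- Weak* convergence of a sequence of measures, tested against bounded continuous functions. -/
def TendstoWeakStar {X : Type*} [TopologicalSpace X] [MeasurableSpace X]
    (γn : ℕ → Measure X) (γ : Measure X) : Prop :=
  ∀ f : BoundedContinuousFunction X ℝ,
    Tendsto (fun n => ∫ x, f x ∂(γn n)) atTop (𝓝 (∫ x, f x ∂γ))

/-- The squared `2`-Wasserstein distance on `𝓟₂(ℝ^d)`. -/
def W2sq {d : ℕ} (μ₁ μ₂ : Measure (Rd d)) : ℝ :=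
  sInf {c | ∃ γ : Measure (Rd d × Rd d), IsCoupling γ μ₁ μ₂ ∧ c = ∫ p, ‖p.1 - p.2‖ ^ 2 ∂γ}

/-- `γ ∈ Ψ(μ₁,μ₂)` for measures on the torus: a probability measure on `𝕋^d × ℝ^d` with finite
second moment whose first projection pushes to `μ₁` and `(x,v) ↦ x + π(v)` pushes to `μ₂`. -/
def IsTransferTd {d : ℕ} (γ : Measure (Td d × Rd d)) (μ₁ μ₂ : Measure (Td d)) : Prop :=
  IsProbabilityMeasure γ ∧ Integrable (fun p => ‖p.2‖ ^ 2) γ ∧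
  γ.map Prod.fst = μ₁ ∧ γ.map (fun p => p.1 + torusProj p.2) = μ₂

/-- `γ ∈ Ψ(μ₁,μ₂)` for measures on `ℝ^d`. -/
def IsTransferRd {d : ℕ} (γ : Measure (Rd d × Rd d)) (μ₁ μ₂ : Measure (Rd d)) : Prop :=
  IsProbabilityMeasure γ ∧ Integrable (fun p => ‖p.2‖ ^ 2) γ ∧
  γ.map Prod.fst = μ₁ ∧ γ.map (fun p => p.1 + p.2) = μ₂

/-- Strong differentiability of `G : 𝓟(𝕋^d) → ℝ` at `μ` with strong derivative `ξ`. -/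
def HasStrongDerivTd {d : ℕ} (G : Measure (Td d) → ℝ) (μ : Measure (Td d))
    (ξ : Td d → Rd d) : Prop :=
  MemLp ξ 2 μ ∧ ∃ k > (0:ℝ), ∀ ν : Measure (Td d), IsProbabilityMeasure ν →
    ∀ γ : Measure (Td d × Rd d), IsTransferTd γ μ ν →
      abs (G ν - G μ - ∫ p, ⟪ξ p.1, p.2⟫ ∂γ) ≤ k * ∫ p, ‖p.2‖ ^ 2 ∂γ

/-- Strong differentiability of `Ḡ : 𝓟₂(ℝ^d) → ℝ` at `μ` with strong derivative `ξ`. -/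
def HasStrongDerivRd {d : ℕ} (G : Measure (Rd d) → ℝ) (μ : Measure (Rd d))
    (ξ : Rd d → Rd d) : Prop :=
  MemLp ξ 2 μ ∧ ∃ k > (0:ℝ), ∀ ν : Measure (Rd d), IsProb2 ν →
    ∀ γ : Measure (Rd d × Rd d), IsTransferRd γ μ ν →
      abs (G ν - G μ - ∫ p, ⟪ξ p.1, p.2⟫ ∂γ) ≤ k * ∫ p, ‖p.2‖ ^ 2 ∂γ

/-- The one-particle action, given the motion `pack` of the whole community. -/
def oneAction {d : ℕ} (D : GoodData d) (t : ℝ) (pack : ℝ → Mspace d) (y y' : ℝ → Rd d) : ℝ :=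
  (∫ s in t..0, ((1:ℝ)/2 * ‖y' s‖ ^ 2 - Fhat D (y s) (pack s))) + u0hat D (y 0) (pack 0)

/-- The one-particle value function, given the motion `pack` of the whole community.
Curves on the torus are identified with their lifts to `ℝ^d`, the integrand being
`ℤ^d`-periodic in the space variable. -/
def uval {d : ℕ} (D : GoodData d) (pack : ℝ → Mspace d) (t : ℝ) (x : Rd d) : ℝ :=
  sInf {A | ∃ y y' : ℝ → Rd d, IsACOn t 0 y y' ∧ y t = x ∧ A = oneAction D t pack y y'}

/-- The one-particle minimality predicate. -/
def IsOneMinimizer {d : ℕ} (D : GoodData d) (t : ℝ) (pack : ℝ → Mspace d) (x : Rd d)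
    (y y' : ℝ → Rd d) : Prop :=
  IsACOn t 0 y y' ∧ y t = x ∧
  ∀ z z' : ℝ → Rd d, IsACOn t 0 z z' → z t = x →
    oneAction D t pack y y' ≤ oneAction D t pack z z'

/-- `σ` (of class `C¹` on `[−T,0]`, with derivatives `σ', σ''`) solves the Euler–Lagrange
system (3.9): `σ̈ₛ(x) = −∇F̂(σₛ(x),σₛ)`, `σ_t = ψ`, `σ̇₀(x) = −∇û₀(σ₀(x),σ₀)`. -/
def SolvesEL {d : ℕ} (D : GoodData d) (T t : ℝ) (ψ : Mspace d) (σ σ' σ'' : ℝ → Mspace d) : Prop :=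
  (∀ s ∈ Icc (-T) (0:ℝ), HasDerivWithinAt σ (σ' s) (Icc (-T) 0) s) ∧
  (∀ s ∈ Icc (-T) (0:ℝ), HasDerivWithinAt σ' (σ'' s) (Icc (-T) 0) s) ∧
  (∀ s ∈ Icc (-T) (0:ℝ), ∀ᵐ x ∂(cubeMeasure d),
    (σ'' s) x = - gradient (fun q => Fhat D q (σ s)) ((σ s) x)) ∧
  σ t = ψ ∧
  (∀ᵐ x ∂(cubeMeasure d), (σ' 0) x = - gradient (fun q => u0hat D q (σ 0)) ((σ 0) x))

/-- The weak formulation of the continuity equation `∂ₛμₛ + div(X μₛ) = 0` on `(t,0) × 𝕋^d`,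
tested against smooth functions, compactly supported in time, identified with their
`ℤ^d`-periodic lifts in the space variable. -/
def IsWeakSolutionCE {d : ℕ} (t : ℝ) (μ : ℝ → Measure (Td d)) (X : ℝ → Td d → Rd d) : Prop :=
  ∀ f : ℝ × Rd d → ℝ, ContDiff ℝ (⊤ : ℕ∞) f →
    (∀ (s : ℝ) (v : Rd d) (z : Fin d → ℤ), f (s, v + intVec z) = f (s, v)) →
    (∃ a b : ℝ, t < a ∧ a ≤ b ∧ b < 0 ∧ ∀ s, s ∉ Icc a b → ∀ v, f (s, v) = 0) →
    ∫ s in t..0, ∫ q, (deriv (fun τ => f (τ, liftTd q)) s +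
      ⟪gradient (fun v => f (s, v)) (liftTd q), X s q⟫) ∂(μ s) = 0

/-- `𝓕(μ) = ½∫∫ φ(z−z′) dμ dμ` on `𝓟(𝕋^d)`. -/
def FcalMeas {d : ℕ} (D : GoodData d) (μ : Measure (Td d)) : ℝ :=
  (1/2) * ∫ z, (∫ z', D.φ (liftTd z - liftTd z') ∂μ) ∂μ

/-- `𝓤₀(μ) = ∫∫ [U⁰(z) + ½U¹(z−z′)] dμ dμ` on `𝓟(𝕋^d)`. -/
def U0calMeas {d : ℕ} (D : GoodData d) (μ : Measure (Td d)) : ℝ :=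
  ∫ z, (D.U0 (liftTd z) + (1/2) * ∫ z', D.U1 (liftTd z - liftTd z') ∂μ) ∂μ

/-- The value function `𝓤(t,μ̄)` on measures. -/
def UcalMeas {d : ℕ} (D : GoodData d) (t : ℝ) (μbar : Measure (Td d)) : ℝ :=
  sInf {A | ∃ (μ : ℝ → Measure (Td d)) (X : ℝ → Td d → Rd d),
    (∀ s, IsProbabilityMeasure (μ s)) ∧
    IsWeakSolutionCE t μ X ∧ μ t = μbar ∧
    IntervalIntegrable (fun s => ∫ q, ‖X s q‖ ^ 2 ∂(μ s)) volume t 0 ∧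
    A = (∫ s in t..0, ((1:ℝ)/2 * ∫ q, ‖X s q‖ ^ 2 ∂(μ s) - FcalMeas D (μ s))) +
      U0calMeas D (μ 0)}


/-- Encoding of the Hilbert space `H¹_M(t,0)` as the isometric product `M × L²((t,0),M)`:
an `H¹` curve corresponds to the pair (initial value, derivative), the `H¹` norm
`‖σ_t‖²_M + ∫_t^0 ‖σ̇_s‖²_M ds` being exactly the product Hilbert norm squared. -/
abbrev H1on (d : ℕ) (t : ℝ) :=
  Mspace d × (Lp (α := ℝ) (Mspace d) 2 (volume.restrict (Ioc t (0:ℝ))))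

/-- The curve associated to an element of `H¹_M(t,0)`: `σ_s = σ_t + ∫_t^s σ̇_u du`. -/
def curveOf {d : ℕ} (t : ℝ) (p : H1on d t) : ℝ → Mspace d :=
  fun s => p.1 + ∫ u in t..s, p.2 u

/-- The augmented action as a functional on `H¹_M(t,0)`. -/
def Ifun {d : ℕ} (D : GoodData d) (t : ℝ) (p : H1on d t) : ℝ :=
  (∫ s in t..0, ((1:ℝ)/2 * ‖(p.2 : ℝ → Mspace d) s‖ ^ 2 - Fcal D (curveOf t p s)))
    + U0cal D (curveOf t p 0)



section AuxProof
def PerVec {d : ℕ} {E : Type*} (f : Rd d → E) : Prop :=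
  ∀ (x : Rd d) (z : Fin d → ℤ), f (x + intVec z) = f x

variable {d : ℕ}

lemma isCompact_unitBox : IsCompact {y : Rd d | ∀ i, y i ∈ Icc (0:ℝ) 1} := by
  have h : {y : Rd d | ∀ i, y i ∈ Icc (0:ℝ) 1} =
      (EuclideanSpace.equiv (Fin d) ℝ).toHomeomorph ⁻¹' (Set.pi univ fun _ => Icc (0:ℝ) 1) := by
    ext y
    simp only [mem_setOf_eq, mem_preimage, Set.mem_pi, mem_univ, true_implies]
    exact Iff.rfl
  rw [h, Homeomorph.isCompact_preimage]
  exact isCompact_univ_pi fun _ => isCompact_Icc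

lemma exists_intVec_mem_box (x : Rd d) :
    ∃ z : Fin d → ℤ, (x + intVec z) ∈ {y : Rd d | ∀ i, y i ∈ Icc (0:ℝ) 1} := by
  refine ⟨fun i => -⌊x i⌋, fun i => ?_⟩
  have : (x + intVec fun i => -⌊x i⌋) i = Int.fract (x i) := by
    show x i + ((-⌊x i⌋ : ℤ) : ℝ) = Int.fract (x i)
    rw [Int.fract]
    push_cast
    ring
  rw [this]
  exact ⟨Int.fract_nonneg _, (Int.fract_lt_one _).le⟩

lemma perVec_bound {E : Type*} [NormedAddCommGroup E] {f : Rd d → E}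
    (hf : Continuous f) (hp : PerVec f) : ∃ C : ℝ, 0 ≤ C ∧ ∀ x, ‖f x‖ ≤ C := by
  obtain ⟨C, hC⟩ := isCompact_unitBox.exists_bound_of_continuousOn (hf.continuousOn (s := {y : Rd d | ∀ i, y i ∈ Icc (0:ℝ) 1}))
  refine ⟨max C 0, le_max_right _ _, fun x => ?_⟩
  obtain ⟨z, hz⟩ := exists_intVec_mem_box x
  calc ‖f x‖ = ‖f (x + intVec z)‖ := by rw [hp x z]
    _ ≤ C := hC _ hz
    _ ≤ max C 0 := le_max_left _ _

lemma perVec_fderiv {E : Type*} [NormedAddCommGroup E] [NormedSpace ℝ E] {f : Rd d → E}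
    (hf : Differentiable ℝ f) (hp : PerVec f) : PerVec (fderiv ℝ f) := by
  intro x z
  have h1 : (fun y : Rd d => f (y + intVec z)) = f := funext fun y => hp y z
  have hid : HasFDerivAt (fun y : Rd d => y + intVec z)
      (ContinuousLinearMap.id ℝ (Rd d)) x := (hasFDerivAt_id x).add_const _
  have h2 : HasFDerivAt (fun y : Rd d => f (y + intVec z))
      (fderiv ℝ f (x + intVec z)) x := by
    exact (hf (x + intVec z)).hasFDerivAt.comp x hid
  rw [h1] at h2
  exact (h2.fderiv).symm

lemma lipschitz_of_bounded_fderiv {E G : Type*} [NormedAddCommGroup E] [NormedSpace ℝ E]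
    [NormedAddCommGroup G] [NormedSpace ℝ G] {f : E → G} {C : ℝ}
    (hf : Differentiable ℝ f) (hC : ∀ x, ‖fderiv ℝ f x‖ ≤ C) (a b : E) :
    ‖f a - f b‖ ≤ C * ‖a - b‖ :=
  convex_univ.norm_image_sub_le_of_norm_fderiv_le (fun x _ => hf x)
    (fun x _ => hC x) (mem_univ b) (mem_univ a)

/-- The master lemma extracting all needed constants from a `C³` periodic function. -/
lemma good_constants {f : Rd d → ℝ} (hf : ContDiff ℝ 3 f) (hp : PerVec f) :
    ∃ C : ℝ, 0 ≤ C ∧ (∀ x, |f x| ≤ C) ∧ (∀ a b, |f a - f b| ≤ C * ‖a - b‖) ∧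
      (∀ a b, |f a + f b - 2 * f ((2:ℝ)⁻¹ • (a + b))| ≤ C * ‖a - b‖ ^ 2) := by
  have hdf : Differentiable ℝ f := hf.differentiable (by norm_num)
  set g := fderiv ℝ f with hg
  have hg_cd : ContDiff ℝ 2 g := hf.fderiv_right (by norm_num)
  have hg_diff : Differentiable ℝ g := hg_cd.differentiable (by norm_num)
  have hg_per : PerVec g := perVec_fderiv hdf hp
  have h2_per : PerVec (fderiv ℝ g) := perVec_fderiv hg_diff hg_per
  have h2_cont : Continuous (fderiv ℝ g) := (hg_cd.fderiv_right (m := 1) (by norm_num)).continuous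
  obtain ⟨B0, hB0, hfB⟩ := perVec_bound hf.continuous hp
  obtain ⟨B1, hB1, hgB⟩ := perVec_bound hg_cd.continuous hg_per
  obtain ⟨B2, hB2, h2B⟩ := perVec_bound h2_cont h2_per
  have hg_lip : ∀ a b : Rd d, ‖g a - g b‖ ≤ B2 * ‖a - b‖ :=
    lipschitz_of_bounded_fderiv hg_diff h2B
  set C := max B0 (max B1 B2) with hC
  have hC0 : 0 ≤ C := le_trans hB0 (le_max_left _ _)
  refine ⟨C, hC0, ?_, ?_, ?_⟩
  · intro x
    calc |f x| ≤ B0 := hfB x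
      _ ≤ C := le_max_left _ _
  · intro a b
    calc |f a - f b| ≤ B1 * ‖a - b‖ := lipschitz_of_bounded_fderiv hdf hgB a b
      _ ≤ C * ‖a - b‖ := by
          gcongr
          exact le_trans (le_max_left _ _) (le_max_right _ _)
  · intro a b
    set m : Rd d := (2:ℝ)⁻¹ • (a + b) with hm
    set h : Rd d := (2:ℝ)⁻¹ • (a - b) with hh
    have ham : a - m = h := by rw [hm, hh]; module
    have hbm : b - m = -h := by rw [hm, hh]; module
    set r : ℝ := ‖h‖ with hr
    have hmem_a : a ∈ Metric.closedBall m r := by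
      rw [Metric.mem_closedBall, dist_eq_norm, ham]
    have hmem_b : b ∈ Metric.closedBall m r := by
      rw [Metric.mem_closedBall, dist_eq_norm, hbm, norm_neg]
    have hmem_m : m ∈ Metric.closedBall m r := Metric.mem_closedBall_self (norm_nonneg _)
    have hbound : ∀ z ∈ Metric.closedBall m r, ‖fderiv ℝ f z - g m‖ ≤ B2 * r := by
      intro z hz
      calc ‖g z - g m‖ ≤ B2 * ‖z - m‖ := hg_lip z m
        _ ≤ B2 * r := by gcongr; rwa [Metric.mem_closedBall, dist_eq_norm] at hz
    have key := fun (x : Rd d) (hx : x ∈ Metric.closedBall m r) =>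
      (convex_closedBall m r).norm_image_sub_le_of_norm_fderiv_le' (φ := g m)
        (fun z _ => hdf z) hbound (Metric.mem_closedBall_self (norm_nonneg _)) hx
    have ka := key a hmem_a
    have kb := key b hmem_b
    rw [ham] at ka
    rw [hbm] at kb
    have hnorm_h : ‖-h‖ = r := by rw [norm_neg]
    rw [hnorm_h] at kb
    have hsum : f a + f b - 2 * f m =
        (f a - f m - (g m) h) + (f b - f m - (g m) (-h)) := by
      have : (g m) (-h) = -((g m) h) := map_neg _ _
      rw [this]; ring
    have hr2 : r = (2:ℝ)⁻¹ * ‖a - b‖ := by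
      rw [hr, hh, norm_smul]; simp
    calc |f a + f b - 2 * f m|
        = |(f a - f m - (g m) h) + (f b - f m - (g m) (-h))| := by rw [hsum]
      _ ≤ |f a - f m - (g m) h| + |f b - f m - (g m) (-h)| := abs_add_le _ _
      _ ≤ B2 * r * r + B2 * r * r := add_le_add ka kb
      _ = 2 * B2 * r ^ 2 := by ring
      _ = (B2 / 2) * ‖a - b‖ ^ 2 := by rw [hr2]; ring
      _ ≤ C * ‖a - b‖ ^ 2 := by
          gcongr
          have : B2 ≤ C := le_trans (le_max_right _ _) (le_max_right _ _)
          linarith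



lemma cube_eq : cube d =
    (⇑(MeasurableEquiv.toLp 2 (Fin d → ℝ)).symm) ⁻¹' (Set.pi univ fun _ => Ico (0:ℝ) 1) := by
  ext y
  simp only [cube, mem_setOf_eq, mem_preimage, Set.mem_pi, mem_univ, true_implies, mem_Ico]
  exact Iff.rfl

lemma volume_cube : volume (cube d) = 1 := by
  rw [cube_eq]
  rw [(EuclideanSpace.volume_preserving_symm_measurableEquiv_toLp (Fin d)).measure_preimage
    (MeasurableSet.univ_pi fun _ => measurableSet_Ico).nullMeasurableSet]
  rw [volume_pi_pi]
  simp [Real.volume_Ico]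

instance : IsProbabilityMeasure (cubeMeasure d) := by
  constructor
  rw [cubeMeasure, Measure.restrict_apply_univ, volume_cube]

variable {d : ℕ}

lemma Mnorm_sq (η : Mspace d) : ∫ x, ‖η x‖^2 ∂(cubeMeasure d) = ‖η‖^2 := by
  have h1 : ⟪η, η⟫ = ∫ x, ⟪η x, η x⟫ ∂(cubeMeasure d) := L2.inner_def η η
  rw [real_inner_self_eq_norm_sq] at h1
  rw [h1]
  refine integral_congr_ae (Eventually.of_forall fun x => ?_)
  simp only [real_inner_self_eq_norm_sq]

lemma integrable_norm_sq (η : Mspace d) :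
    Integrable (fun x => ‖η x‖^2) (cubeMeasure d) := by
  have h := (Lp.memLp η).integrable_norm_rpow (by norm_num) (by norm_num)
  refine h.congr (Eventually.of_forall fun x => ?_)
  norm_num

lemma integral_norm_le (η : Mspace d) : ∫ x, ‖η x‖ ∂(cubeMeasure d) ≤ ‖η‖ := by
  have hpq : Real.HolderConjugate 2 2 := Real.HolderConjugate.two_two
  have hf : MemLp (fun x => ‖η x‖) (ENNReal.ofReal 2) (cubeMeasure d) := by
    have := (Lp.memLp η).norm
    simpa [ENNReal.ofReal_ofNat] using this
  have hg : MemLp (fun _ : Rd d => (1:ℝ)) (ENNReal.ofReal 2) (cubeMeasure d) :=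
    memLp_const 1
  have H := integral_mul_le_Lp_mul_Lq_of_nonneg hpq
    (Eventually.of_forall fun x => norm_nonneg (η x))
    (Eventually.of_forall fun _ => zero_le_one) hf hg
  have h1 : ∫ x, ‖η x‖ * 1 ∂(cubeMeasure d) = ∫ x, ‖η x‖ ∂(cubeMeasure d) := by
    simp
  have h2 : ∫ x, ‖η x‖ ^ (2:ℝ) ∂(cubeMeasure d) = ‖η‖^2 := by
    rw [← Mnorm_sq η]
    refine integral_congr_ae (Eventually.of_forall fun x => ?_)
    norm_num
  have h3 : ∫ x, (1:ℝ) ^ (2:ℝ) ∂(cubeMeasure d) = 1 := by simp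
  rw [h1, h2, h3] at H
  calc ∫ x, ‖η x‖ ∂(cubeMeasure d) ≤ (‖η‖^2) ^ ((1:ℝ)/2) * 1 ^ ((1:ℝ)/2) := H
    _ = ‖η‖ := by
        rw [Real.one_rpow, mul_one, ← Real.rpow_natCast ‖η‖ 2,
          ← Real.rpow_mul (norm_nonneg η)]
        norm_num

abbrev cubeProd (d : ℕ) : Measure (Rd d × Rd d) := (cubeMeasure d).prod (cubeMeasure d)

section Prod
variable {d : ℕ}

local notation "μm" => cubeMeasure d
local notation "γm" => cubeProd d

lemma map_fst_eq : (γm).map Prod.fst = μm := by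
  rw [cubeProd, Measure.map_fst_prod]; simp

lemma map_snd_eq : (γm).map Prod.snd = μm := by
  rw [cubeProd, Measure.map_snd_prod]; simp

lemma integral_comp_fst {h : Rd d → ℝ} (hm : AEStronglyMeasurable h μm) :
    ∫ p : Rd d × Rd d, h p.1 ∂γm = ∫ x, h x ∂μm := by
  have hm' : AEStronglyMeasurable h ((γm).map Prod.fst) := by rwa [map_fst_eq]
  rw [← map_fst_eq (d := d), integral_map measurable_fst.aemeasurable hm']

lemma integral_comp_snd {h : Rd d → ℝ} (hm : AEStronglyMeasurable h μm) :
    ∫ p : Rd d × Rd d, h p.2 ∂γm = ∫ x, h x ∂μm := by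
  have hm' : AEStronglyMeasurable h ((γm).map Prod.snd) := by rwa [map_snd_eq]
  rw [← map_snd_eq (d := d), integral_map measurable_snd.aemeasurable hm']

lemma integrable_comp_fst {h : Rd d → ℝ} (hm : AEStronglyMeasurable h μm)
    (hi : Integrable h μm) : Integrable (fun p : Rd d × Rd d => h p.1) γm := by
  have hm' : AEStronglyMeasurable h ((γm).map Prod.fst) := by rwa [map_fst_eq]
  have := (integrable_map_measure hm' measurable_fst.aemeasurable).1
    (by rwa [map_fst_eq])
  exact this

lemma integrable_comp_snd {h : Rd d → ℝ} (hm : AEStronglyMeasurable h μm)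
    (hi : Integrable h μm) : Integrable (fun p : Rd d × Rd d => h p.2) γm := by
  have hm' : AEStronglyMeasurable h ((γm).map Prod.snd) := by rwa [map_snd_eq]
  have := (integrable_map_measure hm' measurable_snd.aemeasurable).1
    (by rwa [map_snd_eq])
  exact this

lemma aesm_fst (σ : Mspace d) :
    AEStronglyMeasurable (fun p : Rd d × Rd d => σ p.1) γm :=
  (Lp.aestronglyMeasurable σ).comp_quasiMeasurePreserving
    Measure.quasiMeasurePreserving_fst

lemma aesm_snd (σ : Mspace d) :
    AEStronglyMeasurable (fun p : Rd d × Rd d => σ p.2) γm :=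
  (Lp.aestronglyMeasurable σ).comp_quasiMeasurePreserving
    Measure.quasiMeasurePreserving_snd

lemma ae_fst {f f' : Rd d → Rd d} (h : f =ᵐ[μm] f') :
    (fun p : Rd d × Rd d => f p.1) =ᵐ[γm] (fun p => f' p.1) :=
  Measure.quasiMeasurePreserving_fst.ae_eq_comp h

lemma ae_snd {f f' : Rd d → Rd d} (h : f =ᵐ[μm] f') :
    (fun p : Rd d × Rd d => f p.2) =ᵐ[γm] (fun p => f' p.2) :=
  Measure.quasiMeasurePreserving_snd.ae_eq_comp h

lemma integrable_of_bound {X : Type*} [MeasurableSpace X] {ρ : Measure X}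
    [IsFiniteMeasure ρ] {f : X → ℝ} {C : ℝ} (hm : AEStronglyMeasurable f ρ)
    (h : ∀ x, |f x| ≤ C) : Integrable f ρ :=
  (integrable_const C).mono' hm (Eventually.of_forall fun x => by
    simpa using h x)

variable {g : Rd d → ℝ} {C : ℝ}

lemma T_aesm (hgc : Continuous g) (σ τ : Mspace d) :
    AEStronglyMeasurable (fun p : Rd d × Rd d => g (σ p.1 - τ p.2)) γm :=
  hgc.comp_aestronglyMeasurable ((aesm_fst σ).sub (aesm_snd τ))

lemma T_int (hgc : Continuous g) (hb : ∀ x, |g x| ≤ C) (σ τ : Mspace d) :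
    Integrable (fun p : Rd d × Rd d => g (σ p.1 - τ p.2)) γm :=
  integrable_of_bound (T_aesm hgc σ τ) (fun p => hb _)

lemma S_aesm (hgc : Continuous g) (σ : Mspace d) :
    AEStronglyMeasurable (fun x => g (σ x)) μm :=
  hgc.comp_aestronglyMeasurable (Lp.aestronglyMeasurable σ)

lemma S_int (hgc : Continuous g) (hb : ∀ x, |g x| ≤ C) (σ : Mspace d) :
    Integrable (fun x => g (σ x)) μm :=
  integrable_of_bound (S_aesm hgc σ) (fun p => hb _)

lemma T_bound (hgc : Continuous g) (hb : ∀ x, |g x| ≤ C) (σ : Mspace d) :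
    |∫ p : Rd d × Rd d, g (σ p.1 - σ p.2) ∂γm| ≤ C := by
  have h := norm_integral_le_of_norm_le_const (μ := γm)
    (f := fun p : Rd d × Rd d => g (σ p.1 - σ p.2)) (C := C)
    (Eventually.of_forall fun p => by simpa using hb _)
  simpa using h

lemma S_bound (hgc : Continuous g) (hb : ∀ x, |g x| ≤ C) (σ : Mspace d) :
    |∫ x, g (σ x) ∂μm| ≤ C := by
  have h := norm_integral_le_of_norm_le_const (μ := μm)
    (f := fun x => g (σ x)) (C := C)
    (Eventually.of_forall fun p => by simpa using hb _)
  simpa using h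

lemma norm_int_fst (η : Mspace d) :
    Integrable (fun p : Rd d × Rd d => ‖η p.1‖) γm :=
  integrable_comp_fst (Lp.aestronglyMeasurable η).norm
    (memLp_one_iff_integrable.mp ((Lp.memLp η).mono_exponent one_le_two)).norm

lemma norm_int_snd (η : Mspace d) :
    Integrable (fun p : Rd d × Rd d => ‖η p.2‖) γm :=
  integrable_comp_snd (Lp.aestronglyMeasurable η).norm
    (memLp_one_iff_integrable.mp ((Lp.memLp η).mono_exponent one_le_two)).norm

lemma normsq_int_fst (η : Mspace d) :
    Integrable (fun p : Rd d × Rd d => ‖η p.1‖^2) γm :=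
  integrable_comp_fst (integrable_norm_sq η).aestronglyMeasurable (integrable_norm_sq η)

lemma normsq_int_snd (η : Mspace d) :
    Integrable (fun p : Rd d × Rd d => ‖η p.2‖^2) γm :=
  integrable_comp_snd (integrable_norm_sq η).aestronglyMeasurable (integrable_norm_sq η)

lemma T_lip (hgc : Continuous g) (hC : 0 ≤ C) (hb : ∀ x, |g x| ≤ C)
    (hl : ∀ a b, |g a - g b| ≤ C * ‖a - b‖) (σ τ : Mspace d) :
    |(∫ p : Rd d × Rd d, g (σ p.1 - σ p.2) ∂γm) -
      (∫ p : Rd d × Rd d, g (τ p.1 - τ p.2) ∂γm)| ≤ 2 * C * ‖σ - τ‖ := by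
  have hd : ⇑(σ - τ) =ᵐ[μm] fun x => σ x - τ x := Lp.coeFn_sub σ τ
  have key : ∀ᵐ p ∂γm, |g (σ p.1 - σ p.2) - g (τ p.1 - τ p.2)| ≤
      C * (‖(σ - τ) p.1‖ + ‖(σ - τ) p.2‖) := by
    filter_upwards [ae_fst hd, ae_snd hd] with p h1 h2
    calc |g (σ p.1 - σ p.2) - g (τ p.1 - τ p.2)|
        ≤ C * ‖(σ p.1 - σ p.2) - (τ p.1 - τ p.2)‖ := hl _ _
      _ = C * ‖(σ - τ) p.1 - (σ - τ) p.2‖ := by rw [h1, h2]; ring_nf; rw [show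
          σ p.1 - σ p.2 - (τ p.1 - τ p.2) = (σ p.1 - τ p.1) - (σ p.2 - τ p.2) by module]
      _ ≤ C * (‖(σ - τ) p.1‖ + ‖(σ - τ) p.2‖) := by
          gcongr; exact norm_sub_le _ _
  have hint1 := T_int hgc hb σ σ
  have hint2 := T_int hgc hb τ τ
  rw [← integral_sub hint1 hint2]
  calc |∫ p : Rd d × Rd d, (g (σ p.1 - σ p.2) - g (τ p.1 - τ p.2)) ∂γm|
      ≤ ∫ p : Rd d × Rd d, |g (σ p.1 - σ p.2) - g (τ p.1 - τ p.2)| ∂γm := by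
        simpa [Real.norm_eq_abs] using
          norm_integral_le_integral_norm (μ := γm)
            (f := fun p : Rd d × Rd d => g (σ p.1 - σ p.2) - g (τ p.1 - τ p.2))
    _ ≤ ∫ p : Rd d × Rd d, C * (‖(σ - τ) p.1‖ + ‖(σ - τ) p.2‖) ∂γm := by
        have e1 : Integrable (fun p : Rd d × Rd d =>
            |g (σ p.1 - σ p.2) - g (τ p.1 - τ p.2)|) γm := (hint1.sub hint2).abs
        have e2 : Integrable (fun p : Rd d × Rd d =>
            C * (‖(σ - τ) p.1‖ + ‖(σ - τ) p.2‖)) γm :=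
          ((norm_int_fst (σ - τ)).add (norm_int_snd (σ - τ))).const_mul C
        exact integral_mono_ae e1 e2 key
    _ = C * ((∫ p : Rd d × Rd d, ‖(σ - τ) p.1‖ ∂γm) +
        (∫ p : Rd d × Rd d, ‖(σ - τ) p.2‖ ∂γm)) := by
        rw [integral_const_mul]
        congr 1
        exact integral_add (norm_int_fst _) (norm_int_snd _)
    _ = C * ((∫ x, ‖(σ - τ) x‖ ∂μm) + (∫ x, ‖(σ - τ) x‖ ∂μm)) := by
        rw [integral_comp_fst (Lp.aestronglyMeasurable (σ - τ)).norm,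
          integral_comp_snd (Lp.aestronglyMeasurable (σ - τ)).norm]
    _ ≤ C * (‖σ - τ‖ + ‖σ - τ‖) := by
        gcongr <;> exact integral_norm_le _
    _ = 2 * C * ‖σ - τ‖ := by ring

lemma S_lip (hgc : Continuous g) (hC : 0 ≤ C) (hb : ∀ x, |g x| ≤ C)
    (hl : ∀ a b, |g a - g b| ≤ C * ‖a - b‖) (σ τ : Mspace d) :
    |(∫ x, g (σ x) ∂μm) - (∫ x, g (τ x) ∂μm)| ≤ C * ‖σ - τ‖ := by
  have hd : ⇑(σ - τ) =ᵐ[μm] fun x => σ x - τ x := Lp.coeFn_sub σ τ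
  have key : ∀ᵐ x ∂μm, |g (σ x) - g (τ x)| ≤ C * ‖(σ - τ) x‖ := by
    filter_upwards [hd] with x h1
    calc |g (σ x) - g (τ x)| ≤ C * ‖σ x - τ x‖ := hl _ _
      _ = C * ‖(σ - τ) x‖ := by rw [h1]
  have hint1 := S_int hgc hb σ
  have hint2 := S_int hgc hb τ
  rw [← integral_sub hint1 hint2]
  calc |∫ x, (g (σ x) - g (τ x)) ∂μm|
      ≤ ∫ x, |g (σ x) - g (τ x)| ∂μm := by
        simpa [Real.norm_eq_abs] using
          norm_integral_le_integral_norm (μ := μm) (f := fun x => g (σ x) - g (τ x))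
    _ ≤ ∫ x, C * ‖(σ - τ) x‖ ∂μm := by
        have e1 : Integrable (fun x => |g (σ x) - g (τ x)|) μm := (hint1.sub hint2).abs
        have e2 : Integrable (fun x => C * ‖(σ - τ) x‖) μm :=
          ((memLp_one_iff_integrable.mp
            ((Lp.memLp (σ - τ)).mono_exponent one_le_two)).norm).const_mul C
        exact integral_mono_ae e1 e2 key
    _ = C * ∫ x, ‖(σ - τ) x‖ ∂μm := integral_const_mul _ _
    _ ≤ C * ‖σ - τ‖ := by gcongr; exact integral_norm_le _

lemma coe_mid (σ τ : Mspace d) :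
    ⇑((2:ℝ)⁻¹ • (σ + τ)) =ᵐ[μm] fun x => (2:ℝ)⁻¹ • (σ x + τ x) := by
  filter_upwards [Lp.coeFn_smul ((2:ℝ)⁻¹) (σ + τ), Lp.coeFn_add σ τ] with x h1 h2
  rw [h1]
  simp only [Pi.smul_apply, h2, Pi.add_apply]

lemma T_mid (hgc : Continuous g) (hC : 0 ≤ C) (hb : ∀ x, |g x| ≤ C)
    (hq : ∀ a b, g a + g b - 2 * g ((2:ℝ)⁻¹ • (a + b)) ≤ C * ‖a - b‖ ^ 2) (σ τ : Mspace d) :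
    (∫ p : Rd d × Rd d, g (σ p.1 - σ p.2) ∂γm) +
      (∫ p : Rd d × Rd d, g (τ p.1 - τ p.2) ∂γm) -
      2 * (∫ p : Rd d × Rd d, g (((2:ℝ)⁻¹ • (σ + τ)) p.1 - ((2:ℝ)⁻¹ • (σ + τ)) p.2) ∂γm)
      ≤ 4 * C * ‖σ - τ‖ ^ 2 := by
  set m : Mspace d := (2:ℝ)⁻¹ • (σ + τ) with hm
  have hmid := coe_mid σ τ
  have hd : ⇑(σ - τ) =ᵐ[μm] fun x => σ x - τ x := Lp.coeFn_sub σ τ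
  have key : ∀ᵐ p ∂γm, g (σ p.1 - σ p.2) + g (τ p.1 - τ p.2) - 2 * g (m p.1 - m p.2) ≤
      2 * C * (‖(σ - τ) p.1‖^2 + ‖(σ - τ) p.2‖^2) := by
    filter_upwards [ae_fst hmid, ae_snd hmid, ae_fst hd, ae_snd hd] with p h1 h2 h3 h4
    have hmm : m p.1 - m p.2 = (2:ℝ)⁻¹ • ((σ p.1 - σ p.2) + (τ p.1 - τ p.2)) := by
      rw [h1, h2]; module
    have hup := hq (σ p.1 - σ p.2) (τ p.1 - τ p.2)
    rw [← hmm] at hup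
    have hab : (σ p.1 - σ p.2) - (τ p.1 - τ p.2) = (σ - τ) p.1 - (σ - τ) p.2 := by
      rw [h3, h4]; module
    rw [hab] at hup
    refine hup.trans ?_
    have h5 := norm_sub_le ((σ - τ) p.1) ((σ - τ) p.2)
    have h6 : ‖(σ - τ) p.1 - (σ - τ) p.2‖^2 ≤
        2 * (‖(σ - τ) p.1‖^2 + ‖(σ - τ) p.2‖^2) := by
      nlinarith [h5, sq_nonneg (‖(σ - τ) p.1‖ - ‖(σ - τ) p.2‖),
        norm_nonneg ((σ - τ) p.1 - (σ - τ) p.2), norm_nonneg ((σ - τ) p.1),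
        norm_nonneg ((σ - τ) p.2)]
    nlinarith
  have hi1 := T_int hgc hb σ σ
  have hi2 := T_int hgc hb τ τ
  have hi3 := T_int hgc hb m m
  have hiR : Integrable (fun p : Rd d × Rd d =>
      2 * C * (‖(σ - τ) p.1‖^2 + ‖(σ - τ) p.2‖^2)) γm :=
    ((normsq_int_fst (σ - τ)).add (normsq_int_snd (σ - τ))).const_mul _
  have e1 : Integrable (fun p : Rd d × Rd d =>
      g (σ p.1 - σ p.2) + g (τ p.1 - τ p.2)) γm := hi1.add hi2
  have e2 : Integrable (fun p : Rd d × Rd d => 2 * g (m p.1 - m p.2)) γm :=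
    hi3.const_mul 2
  have e3 : Integrable (fun p : Rd d × Rd d =>
      g (σ p.1 - σ p.2) + g (τ p.1 - τ p.2) - 2 * g (m p.1 - m p.2)) γm := e1.sub e2
  have hL : (∫ p : Rd d × Rd d, g (σ p.1 - σ p.2) ∂γm) +
      (∫ p : Rd d × Rd d, g (τ p.1 - τ p.2) ∂γm) -
      2 * (∫ p : Rd d × Rd d, g (m p.1 - m p.2) ∂γm) =
      ∫ p : Rd d × Rd d, (g (σ p.1 - σ p.2) + g (τ p.1 - τ p.2)
        - 2 * g (m p.1 - m p.2)) ∂γm := by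
    rw [integral_sub e1 e2, integral_add hi1 hi2, integral_const_mul]
  rw [hL]
  calc ∫ p : Rd d × Rd d, (g (σ p.1 - σ p.2) + g (τ p.1 - τ p.2)
        - 2 * g (m p.1 - m p.2)) ∂γm
      ≤ ∫ p : Rd d × Rd d, 2 * C * (‖(σ - τ) p.1‖^2 + ‖(σ - τ) p.2‖^2) ∂γm :=
        integral_mono_ae e3 hiR key
    _ = 2 * C * ((∫ p : Rd d × Rd d, ‖(σ - τ) p.1‖^2 ∂γm) +
        (∫ p : Rd d × Rd d, ‖(σ - τ) p.2‖^2 ∂γm)) := by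
        rw [integral_const_mul]
        congr 1
        exact integral_add (normsq_int_fst _) (normsq_int_snd _)
    _ = 2 * C * (‖σ - τ‖^2 + ‖σ - τ‖^2) := by
        rw [integral_comp_fst (integrable_norm_sq (σ - τ)).aestronglyMeasurable,
          integral_comp_snd (integrable_norm_sq (σ - τ)).aestronglyMeasurable,
          Mnorm_sq]
    _ = 4 * C * ‖σ - τ‖ ^ 2 := by ring

lemma S_mid (hgc : Continuous g) (hC : 0 ≤ C) (hb : ∀ x, |g x| ≤ C)
    (hq : ∀ a b, g a + g b - 2 * g ((2:ℝ)⁻¹ • (a + b)) ≤ C * ‖a - b‖ ^ 2) (σ τ : Mspace d) :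
    (∫ x, g (σ x) ∂μm) + (∫ x, g (τ x) ∂μm) -
      2 * (∫ x, g (((2:ℝ)⁻¹ • (σ + τ)) x) ∂μm) ≤ C * ‖σ - τ‖ ^ 2 := by
  set m : Mspace d := (2:ℝ)⁻¹ • (σ + τ) with hm
  have hmid := coe_mid σ τ
  have hd : ⇑(σ - τ) =ᵐ[μm] fun x => σ x - τ x := Lp.coeFn_sub σ τ
  have key : ∀ᵐ x ∂μm, g (σ x) + g (τ x) - 2 * g (m x) ≤ C * ‖(σ - τ) x‖^2 := by
    filter_upwards [hmid, hd] with x h1 h2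
    have hup := hq (σ x) (τ x)
    rw [← h1] at hup
    refine hup.trans ?_
    rw [h2]
  have hi1 := S_int hgc hb σ
  have hi2 := S_int hgc hb τ
  have hi3 := S_int hgc hb m
  have hiR : Integrable (fun x => C * ‖(σ - τ) x‖^2) μm :=
    (integrable_norm_sq (σ - τ)).const_mul _
  have e1 : Integrable (fun x => g (σ x) + g (τ x)) μm := hi1.add hi2
  have e2 : Integrable (fun x => 2 * g (m x)) μm := hi3.const_mul 2
  have e3 : Integrable (fun x => g (σ x) + g (τ x) - 2 * g (m x)) μm := e1.sub e2
  have hL : (∫ x, g (σ x) ∂μm) + (∫ x, g (τ x) ∂μm) - 2 * (∫ x, g (m x) ∂μm) =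
      ∫ x, (g (σ x) + g (τ x) - 2 * g (m x)) ∂μm := by
    rw [integral_sub e1 e2, integral_add hi1 hi2, integral_const_mul]
  rw [hL]
  calc ∫ x, (g (σ x) + g (τ x) - 2 * g (m x)) ∂μm
      ≤ ∫ x, C * ‖(σ - τ) x‖^2 ∂μm :=
        integral_mono_ae e3 hiR key
    _ = C * ∫ x, ‖(σ - τ) x‖^2 ∂μm := integral_const_mul _ _
    _ = C * ‖σ - τ‖ ^ 2 := by rw [Mnorm_sq]

end Prod

section FcalFacts
variable {d : ℕ}

local notation "μm" => cubeMeasure d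
local notation "γm" => cubeProd d

lemma Fcal_eq_prod (D : GoodData d) (σ : Mspace d) :
    Fcal D σ = (1/2) * ∫ p : Rd d × Rd d, D.φ (σ p.1 - σ p.2) ∂γm := by
  obtain ⟨C, hC0, hb, hl, hq⟩ := good_constants D.φ_smooth D.φ_periodic
  rw [Fcal]
  congr 1
  exact integral_integral (T_int D.φ_smooth.continuous hb σ σ)

lemma U0cal_eq_prod (D : GoodData d) (σ : Mspace d) :
    U0cal D σ = (∫ x, D.U0 (σ x) ∂μm) +
      (1/2) * ∫ p : Rd d × Rd d, D.U1 (σ p.1 - σ p.2) ∂γm := by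
  obtain ⟨C0, hC00, hb0, hl0, hq0⟩ := good_constants D.U0_smooth D.U0_periodic
  obtain ⟨C1, hC10, hb1, hl1, hq1⟩ := good_constants D.U1_smooth D.U1_periodic
  have hint1 : Integrable (fun x => D.U0 (σ x)) μm := S_int D.U0_smooth.continuous hb0 σ
  have hprod : Integrable (fun p : Rd d × Rd d => D.U1 (σ p.1 - σ p.2)) γm :=
    T_int D.U1_smooth.continuous hb1 σ σ
  have hint2 : Integrable (fun x => ∫ y, D.U1 (σ x - σ y) ∂μm) μm :=
    hprod.integral_prod_left
  have hint2' : Integrable (fun x => (1/2) * ∫ y, D.U1 (σ x - σ y) ∂μm) μm :=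
    hint2.const_mul _
  rw [U0cal, integral_add hint1 hint2', integral_const_mul]
  congr 2
  exact integral_integral hprod

/-- Packaged analytic facts about `Fcal`. -/
lemma fcal_facts (D : GoodData d) : ∃ C : ℝ, 0 ≤ C ∧
    (∀ σ : Mspace d, |Fcal D σ| ≤ C) ∧
    (∀ σ τ : Mspace d, |Fcal D σ - Fcal D τ| ≤ C * ‖σ - τ‖) ∧
    (∀ σ τ : Mspace d,
      Fcal D σ + Fcal D τ - 2 * Fcal D ((2:ℝ)⁻¹ • (σ + τ)) ≤ C * ‖σ - τ‖ ^ 2) := by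
  obtain ⟨C, hC0, hb, hl, hq⟩ := good_constants D.φ_smooth D.φ_periodic
  have hgc := D.φ_smooth.continuous
  refine ⟨2 * C, by linarith, fun σ => ?_, fun σ τ => ?_, fun σ τ => ?_⟩
  · rw [Fcal_eq_prod]
    rw [abs_mul]
    have := T_bound hgc hb σ
    rw [abs_of_nonneg (by norm_num : (0:ℝ) ≤ 1/2)]
    nlinarith
  · rw [Fcal_eq_prod, Fcal_eq_prod, ← mul_sub, abs_mul,
      abs_of_nonneg (by norm_num : (0:ℝ) ≤ 1/2)]
    have := T_lip hgc hC0 hb hl σ τ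
    have hn : (0:ℝ) ≤ ‖σ - τ‖ := norm_nonneg _
    nlinarith
  · rw [Fcal_eq_prod, Fcal_eq_prod, Fcal_eq_prod]
    have := T_mid hgc hC0 hb (fun a b => le_of_abs_le (hq a b)) σ τ
    have hn : (0:ℝ) ≤ ‖σ - τ‖ ^ 2 := sq_nonneg _
    nlinarith

/-- Packaged analytic facts about `U0cal`. -/
lemma u0cal_facts (D : GoodData d) : ∃ C : ℝ, 0 ≤ C ∧
    (∀ σ : Mspace d, |U0cal D σ| ≤ C) ∧
    (∀ σ τ : Mspace d, |U0cal D σ - U0cal D τ| ≤ C * ‖σ - τ‖) ∧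
    (∀ σ τ : Mspace d,
      2 * U0cal D ((2:ℝ)⁻¹ • (σ + τ)) - U0cal D σ - U0cal D τ ≤ C * ‖σ - τ‖ ^ 2) := by
  obtain ⟨C0, hC00, hb0, hl0, hq0⟩ := good_constants D.U0_smooth D.U0_periodic
  obtain ⟨C1, hC10, hb1, hl1, hq1⟩ := good_constants D.U1_smooth D.U1_periodic
  have hgc0 := D.U0_smooth.continuous
  have hgc1 := D.U1_smooth.continuous
  refine ⟨C0 + 2 * C1, by linarith, fun σ => ?_, fun σ τ => ?_, fun σ τ => ?_⟩
  · rw [U0cal_eq_prod]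
    have h1 := S_bound hgc0 hb0 σ
    have h2 := T_bound hgc1 hb1 σ
    have := abs_add_le (∫ x, D.U0 (σ x) ∂μm)
      ((1/2) * ∫ p : Rd d × Rd d, D.U1 (σ p.1 - σ p.2) ∂γm)
    rw [abs_mul, abs_of_nonneg (by norm_num : (0:ℝ) ≤ 1/2)] at this
    nlinarith
  · rw [U0cal_eq_prod, U0cal_eq_prod]
    have h1 := S_lip hgc0 hC00 hb0 hl0 σ τ
    have h2 := T_lip hgc1 hC10 hb1 hl1 σ τ
    have key : (∫ x, D.U0 (σ x) ∂μm) +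
        (1/2) * (∫ p : Rd d × Rd d, D.U1 (σ p.1 - σ p.2) ∂γm) -
        ((∫ x, D.U0 (τ x) ∂μm) +
        (1/2) * (∫ p : Rd d × Rd d, D.U1 (τ p.1 - τ p.2) ∂γm)) =
        ((∫ x, D.U0 (σ x) ∂μm) - (∫ x, D.U0 (τ x) ∂μm)) +
        (1/2) * ((∫ p : Rd d × Rd d, D.U1 (σ p.1 - σ p.2) ∂γm) -
          (∫ p : Rd d × Rd d, D.U1 (τ p.1 - τ p.2) ∂γm)) := by ring
    rw [key]
    refine (abs_add_le _ _).trans ?_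
    rw [abs_mul, abs_of_nonneg (by norm_num : (0:ℝ) ≤ 1/2)]
    nlinarith [norm_nonneg (σ - τ), mul_nonneg hC10 (norm_nonneg (σ - τ))]
  · rw [U0cal_eq_prod, U0cal_eq_prod, U0cal_eq_prod]
    have hb0' : ∀ x, |(fun y => -D.U0 y) x| ≤ C0 := fun x => by
      simpa [abs_neg] using hb0 x
    have hb1' : ∀ x, |(fun y => -D.U1 y) x| ≤ C1 := fun x => by
      simpa [abs_neg] using hb1 x
    have hqq0 : ∀ a b : Rd d, (fun y => -D.U0 y) a + (fun y => -D.U0 y) b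
        - 2 * (fun y => -D.U0 y) ((2:ℝ)⁻¹ • (a + b)) ≤ C0 * ‖a - b‖^2 := by
      intro a b
      have h := abs_le.mp (hq0 a b)
      simp only
      linarith [h.1]
    have hqq1 : ∀ a b : Rd d, (fun y => -D.U1 y) a + (fun y => -D.U1 y) b
        - 2 * (fun y => -D.U1 y) ((2:ℝ)⁻¹ • (a + b)) ≤ C1 * ‖a - b‖^2 := by
      intro a b
      have h := abs_le.mp (hq1 a b)
      simp only
      linarith [h.1]
    have h1 := S_mid (g := fun y => -D.U0 y) hgc0.neg hC00 hb0' hqq0 σ τ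
    have h2 := T_mid (g := fun y => -D.U1 y) hgc1.neg hC10 hb1' hqq1 σ τ
    simp only [integral_neg] at h1 h2
    linarith

end FcalFacts

section TimeSide

lemma Ioc_fin (a b : ℝ) : IsFiniteMeasure (volume.restrict (Ioc a b)) := by
  constructor
  rw [Measure.restrict_apply_univ, Real.volume_Ioc]
  exact ENNReal.ofReal_lt_top

lemma L2normSq {X : Type*} [MeasurableSpace X] {ρ : Measure X} {E : Type*}
    [NormedAddCommGroup E] [InnerProductSpace ℝ E] (f : Lp E 2 ρ) :
    ∫ x, ‖f x‖^2 ∂ρ = ‖f‖^2 := by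
  have h1 : ⟪f, f⟫ = ∫ x, ⟪f x, f x⟫ ∂ρ := L2.inner_def f f
  rw [real_inner_self_eq_norm_sq] at h1
  rw [h1]
  refine integral_congr_ae (Eventually.of_forall fun x => ?_)
  simp only [real_inner_self_eq_norm_sq]

lemma integrable_sq_of_memLp2 {X : Type*} [MeasurableSpace X] {ρ : Measure X} {E : Type*}
    [NormedAddCommGroup E] {f : X → E} (h : MemLp f 2 ρ) :
    Integrable (fun x => ‖f x‖^2) ρ := by
  have h2 := h.integrable_norm_rpow (by norm_num) (by norm_num)
  refine h2.congr (Eventually.of_forall fun x => ?_)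
  norm_num

lemma cont_of_lip {X : Type*} [SeminormedAddCommGroup X] {f : X → ℝ} {C : ℝ}
    (h : ∀ x y, |f x - f y| ≤ C * ‖x - y‖) : Continuous f := by
  refine (LipschitzWith.of_dist_le_mul (K := C.toNNReal) fun x y => ?_).continuous
  rw [Real.dist_eq, dist_eq_norm]
  refine (h x y).trans ?_
  gcongr
  exact Real.le_coe_toNNReal C

/-- The Hilbert space `L²((t,0), M)` of derivatives. -/
abbrev Wsp (d : ℕ) (t : ℝ) := Lp (α := ℝ) (Mspace d) 2 (volume.restrict (Ioc t (0:ℝ)))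

/-- The curve associated to an initial point and a derivative in `L²`. -/
def crvW {d : ℕ} (t : ℝ) (ψ : Mspace d) (w : Wsp d t) : ℝ → Mspace d :=
  fun s => ψ + ∫ u in t..s, w u

/-- The action functional on `L²((t,0),M)`. -/
def Jf {d : ℕ} (D : GoodData d) (t : ℝ) (ψ : Mspace d) (w : Wsp d t) : ℝ :=
  action D t (crvW t ψ w) ⇑w

variable {d : ℕ} {t : ℝ}

lemma wInt (w : Wsp d t) {s : ℝ} (hts : t ≤ s) (hs0 : s ≤ 0) :
    IntervalIntegrable (⇑w) volume t s := by
  haveI := Ioc_fin t (0:ℝ)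
  have h1 : Integrable (⇑w) (volume.restrict (Ioc t 0)) :=
    memLp_one_iff_integrable.mp ((Lp.memLp w).mono_exponent one_le_two)
  have hle : volume.restrict (Ioc t s) ≤ volume.restrict (Ioc t 0) :=
    Measure.restrict_mono (Ioc_subset_Ioc le_rfl hs0) le_rfl
  exact (intervalIntegrable_iff_integrableOn_Ioc_of_le hts).mpr (h1.mono_measure hle)

lemma wIntSq (w : Wsp d t) {s : ℝ} (hts : t ≤ s) (hs0 : s ≤ 0) :
    IntervalIntegrable (fun u => ‖w u‖^2) volume t s := by
  have h1 : Integrable (fun u => ‖w u‖^2) (volume.restrict (Ioc t 0)) :=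
    integrable_sq_of_memLp2 (Lp.memLp w)
  have hle : volume.restrict (Ioc t s) ≤ volume.restrict (Ioc t 0) :=
    Measure.restrict_mono (Ioc_subset_Ioc le_rfl hs0) le_rfl
  exact (intervalIntegrable_iff_integrableOn_Ioc_of_le hts).mpr (h1.mono_measure hle)

lemma ae_on_uIoc {s : ℝ} (hts : t ≤ s) (hs0 : s ≤ 0) {E : Type*}
    {f g : ℝ → E} (h : f =ᵐ[volume.restrict (Ioc t (0:ℝ))] g) :
    ∀ᵐ u ∂volume, u ∈ uIoc t s → f u = g u := by
  have h2 := (ae_restrict_iff' measurableSet_Ioc).mp h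
  filter_upwards [h2] with u hu hmem
  rw [uIoc_of_le hts] at hmem
  exact hu (Ioc_subset_Ioc le_rfl hs0 hmem)

lemma crv_start {ψ : Mspace d} (w : Wsp d t) : crvW t ψ w t = ψ := by
  simp [crvW]

lemma crv_isACOn (ht0 : t ≤ 0) {ψ : Mspace d} (w : Wsp d t) :
    IsACOn t 0 (crvW t ψ w) ⇑w := by
  refine ⟨wInt w ht0 le_rfl, wIntSq w ht0 le_rfl, fun s hs => ?_⟩
  rw [crv_start, crvW]

lemma crv_sub (ht0 : t ≤ 0) {ψ : Mspace d} {s : ℝ} (hs : s ∈ Icc t (0:ℝ)) (w v : Wsp d t) :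
    crvW t ψ w s - crvW t ψ v s = ∫ u in t..s, (w - v) u := by
  have hae : ∀ᵐ u ∂volume, u ∈ uIoc t s → (w - v) u = w u - v u :=
    ae_on_uIoc hs.1 hs.2 (Lp.coeFn_sub w v)
  rw [intervalIntegral.integral_congr_ae hae,
    intervalIntegral.integral_sub (wInt w hs.1 hs.2) (wInt v hs.1 hs.2)]
  simp only [crvW]
  abel

lemma crv_mid (ht0 : t ≤ 0) {ψ : Mspace d} {s : ℝ} (hs : s ∈ Icc t (0:ℝ)) (w v : Wsp d t) :
    crvW t ψ ((2:ℝ)⁻¹ • (w + v)) s = (2:ℝ)⁻¹ • (crvW t ψ w s + crvW t ψ v s) := by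
  have hae : ∀ᵐ u ∂volume, u ∈ uIoc t s →
      ((2:ℝ)⁻¹ • (w + v)) u = (2:ℝ)⁻¹ • (w u + v u) := by
    have h1 : ⇑((2:ℝ)⁻¹ • (w + v)) =ᵐ[volume.restrict (Ioc t (0:ℝ))]
        fun u => (2:ℝ)⁻¹ • (w u + v u) := by
      filter_upwards [Lp.coeFn_smul ((2:ℝ)⁻¹) (w + v), Lp.coeFn_add w v] with u h1 h2
      rw [h1]
      simp only [Pi.smul_apply, h2, Pi.add_apply]
    exact ae_on_uIoc hs.1 hs.2 h1
  rw [crvW, intervalIntegral.integral_congr_ae hae, intervalIntegral.integral_smul,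
    intervalIntegral.integral_add (wInt w hs.1 hs.2) (wInt v hs.1 hs.2)]
  simp only [crvW]
  module

lemma curve_diff_le (ht0 : t ≤ 0) {s : ℝ} (hs : s ∈ Icc t (0:ℝ)) (η : Wsp d t)
    {B : ℝ} (hB : 0 - t ≤ B) : ‖∫ u in t..s, η u‖ ≤ Real.sqrt B * ‖η‖ := by
  haveI := Ioc_fin t (0:ℝ)
  haveI := Ioc_fin t s
  have hts : t ≤ s := hs.1
  have hB0 : 0 ≤ B := le_trans (by linarith) hB
  set ρ := volume.restrict (Ioc t s) with hρ
  have hle : ρ ≤ volume.restrict (Ioc t 0) :=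
    Measure.restrict_mono (Ioc_subset_Ioc le_rfl hs.2) le_rfl
  have hmem : MemLp (⇑η) 2 ρ := (Lp.memLp η).mono_measure hle
  have h1 : ‖∫ u in t..s, η u‖ ≤ ∫ u in t..s, ‖η u‖ :=
    intervalIntegral.norm_integral_le_integral_norm hts
  have h2 : ∫ u in t..s, ‖η u‖ = ∫ u, ‖η u‖ ∂ρ := intervalIntegral.integral_of_le hts
  have hpq : Real.HolderConjugate 2 2 := Real.HolderConjugate.two_two
  have hf : MemLp (fun u => ‖η u‖) (ENNReal.ofReal 2) ρ := by
    simpa [ENNReal.ofReal_ofNat] using hmem.norm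
  have hg : MemLp (fun _ : ℝ => (1:ℝ)) (ENNReal.ofReal 2) ρ := memLp_const 1
  have H := integral_mul_le_Lp_mul_Lq_of_nonneg hpq
    (Eventually.of_forall fun x => norm_nonneg (η x))
    (Eventually.of_forall fun _ => zero_le_one) hf hg
  simp only [mul_one] at H
  have hsq : ∫ u, ‖η u‖ ^ (2:ℝ) ∂ρ = ∫ u, ‖η u‖^2 ∂ρ :=
    integral_congr_ae (Eventually.of_forall fun u => by norm_num)
  have hmono : ∫ u, ‖η u‖^2 ∂ρ ≤ ∫ u, ‖η u‖^2 ∂(volume.restrict (Ioc t 0)) :=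
    integral_mono_measure hle (Eventually.of_forall fun u => sq_nonneg _)
      (integrable_sq_of_memLp2 (Lp.memLp η))
  have hnorm : ∫ u, ‖η u‖^2 ∂(volume.restrict (Ioc t 0)) = ‖η‖^2 := L2normSq η
  have hone : ∫ u, (1:ℝ) ^ (2:ℝ) ∂ρ = s - t := by
    simp only [Real.one_rpow, integral_const, smul_eq_mul, mul_one]
    rw [hρ, measureReal_restrict_apply_univ, Real.volume_real_Ioc_of_le hts]
  rw [hsq, hone] at H
  have hsqnn : (0:ℝ) ≤ ∫ u, ‖η u‖^2 ∂ρ :=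
    integral_nonneg fun u => sq_nonneg _
  have key : ∫ u, ‖η u‖ ∂ρ ≤ (‖η‖^2) ^ ((1:ℝ)/2) * B ^ ((1:ℝ)/2) := by
    refine H.trans ?_
    have e1 : (∫ u, ‖η u‖^2 ∂ρ) ^ ((1:ℝ)/2) ≤ (‖η‖^2) ^ ((1:ℝ)/2) :=
      Real.rpow_le_rpow hsqnn (hmono.trans_eq hnorm) (by norm_num)
    have e2 : (s - t) ^ ((1:ℝ)/2) ≤ B ^ ((1:ℝ)/2) :=
      Real.rpow_le_rpow (by linarith) (by linarith [hs.2]) (by norm_num)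
    exact mul_le_mul e1 e2 (Real.rpow_nonneg (by linarith) _)
      (Real.rpow_nonneg (sq_nonneg _) _)
  have hc1 : (‖η‖^2) ^ ((1:ℝ)/2) = ‖η‖ := by
    rw [← Real.sqrt_eq_rpow, Real.sqrt_sq (norm_nonneg η)]
  have hc2 : B ^ ((1:ℝ)/2) = Real.sqrt B := (Real.sqrt_eq_rpow B).symm
  rw [hc1, hc2] at key
  calc ‖∫ u in t..s, η u‖ ≤ ∫ u in t..s, ‖η u‖ := h1
    _ = ∫ u, ‖η u‖ ∂ρ := h2
    _ ≤ ‖η‖ * Real.sqrt B := key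
    _ = Real.sqrt B * ‖η‖ := by ring

lemma curve_diff_sq_le (ht0 : t ≤ 0) {ψ : Mspace d} {s : ℝ} (hs : s ∈ Icc t (0:ℝ))
    (w v : Wsp d t) {B : ℝ} (hB : 0 - t ≤ B) :
    ‖crvW t ψ w s - crvW t ψ v s‖^2 ≤ B * ‖w - v‖^2 := by
  have hB0 : 0 ≤ B := le_trans (by linarith) hB
  rw [crv_sub ht0 hs w v]
  have h := curve_diff_le ht0 hs (w - v) hB
  calc ‖∫ u in t..s, (w - v) u‖^2 ≤ (Real.sqrt B * ‖w - v‖)^2 := by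
        have h0 : (0:ℝ) ≤ ‖∫ u in t..s, (w - v) u‖ := norm_nonneg _
        nlinarith [norm_nonneg (w - v), Real.sqrt_nonneg B]
    _ = B * ‖w - v‖^2 := by
        rw [mul_pow, Real.sq_sqrt hB0]

lemma crv_continuousOn (ht0 : t ≤ 0) {ψ : Mspace d} (w : Wsp d t) :
    ContinuousOn (crvW t ψ w) (Icc t 0) := by
  have hInt : IntegrableOn (⇑w) (Icc t 0) volume := by
    rw [integrableOn_Icc_iff_integrableOn_Ioc]
    exact (intervalIntegrable_iff_integrableOn_Ioc_of_le ht0).mp (wInt w ht0 le_rfl)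
  have hcont := intervalIntegral.continuousOn_primitive (a := t) (b := 0) (f := ⇑w)
    (μ := volume) hInt
  have : ContinuousOn (fun s => ∫ u in t..s, w u) (Icc t 0) := by
    refine hcont.congr fun s hs => ?_
    rw [intervalIntegral.integral_of_le hs.1]
  exact continuousOn_const.add this

lemma fcal_intervalIntegrable (D : GoodData d) (ht0 : t ≤ 0) {ψ : Mspace d}
    (hFc : Continuous (Fcal D (d := d))) (w : Wsp d t) :
    IntervalIntegrable (fun s => Fcal D (crvW t ψ w s)) volume t 0 := by
  have hcomp : ContinuousOn (fun s => Fcal D (crvW t ψ w s)) (Icc t 0) :=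
    hFc.comp_continuousOn (crv_continuousOn ht0 w)
  refine ContinuousOn.intervalIntegrable ?_
  rwa [uIcc_of_le ht0]

lemma kinetic_eq (ht0 : t ≤ 0) (w : Wsp d t) :
    ∫ s in t..0, ‖w s‖^2 = ‖w‖^2 := by
  rw [intervalIntegral.integral_of_le ht0]
  exact L2normSq w

lemma Jf_split (D : GoodData d) (ht0 : t ≤ 0) {ψ : Mspace d}
    (hFc : Continuous (Fcal D (d := d))) (w : Wsp d t) :
    Jf D t ψ w = (1/2) * ‖w‖^2 - (∫ s in t..0, Fcal D (crvW t ψ w s))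
      + U0cal D (crvW t ψ w 0) := by
  rw [Jf, action]
  congr 1
  have h1 : IntervalIntegrable (fun s => (1:ℝ)/2 * ‖w s‖^2) volume t 0 :=
    (wIntSq w ht0 le_rfl).const_mul _
  have h2 := fcal_intervalIntegrable D ht0 (ψ := ψ) hFc w
  rw [intervalIntegral.integral_sub h1 h2, intervalIntegral.integral_const_mul,
    kinetic_eq ht0 w]

end TimeSide

section MainCore
variable {d : ℕ} {t : ℝ}

lemma action_repr (D : GoodData d) (ht0 : t ≤ 0) {ψ : Mspace d} {σ σ' : ℝ → Mspace d}
    (hAC : IsACOn t 0 σ σ') (hst : σ t = ψ) :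
    ∃ w : Wsp d t, ⇑w =ᵐ[volume.restrict (Ioc t (0:ℝ))] σ' ∧
      action D t σ σ' = Jf D t ψ w := by
  obtain ⟨hI1, hI2, hrep⟩ := hAC
  have haesm : AEStronglyMeasurable σ' (volume.restrict (Ioc t (0:ℝ))) :=
    hI1.1.aestronglyMeasurable
  have hsq : Integrable (fun s => ‖σ' s‖^2) (volume.restrict (Ioc t (0:ℝ))) := hI2.1
  have hmem : MemLp σ' 2 (volume.restrict (Ioc t (0:ℝ))) :=
    (memLp_two_iff_integrable_sq_norm haesm).mpr hsq
  refine ⟨hmem.toLp σ', MemLp.coeFn_toLp hmem, ?_⟩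
  set w := hmem.toLp σ' with hw
  have hcoe : ⇑w =ᵐ[volume.restrict (Ioc t (0:ℝ))] σ' := MemLp.coeFn_toLp hmem
  have hint : ∀ s ∈ Icc t (0:ℝ), (∫ u in t..s, σ' u) = ∫ u in t..s, w u := fun s hs =>
    (intervalIntegral.integral_congr_ae (ae_on_uIoc hs.1 hs.2 hcoe)).symm
  have hcrv : ∀ s ∈ Icc t (0:ℝ), σ s = crvW t ψ w s := by
    intro s hs
    rw [hrep s hs, hst, crvW, hint s hs]
  rw [action, Jf, action]
  congr 1
  · refine intervalIntegral.integral_congr_ae ?_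
    filter_upwards [ae_on_uIoc ht0 le_rfl hcoe] with u hu hmem'
    have hIcc : u ∈ Icc t (0:ℝ) := by
      rw [uIoc_of_le ht0] at hmem'
      exact Ioc_subset_Icc_self hmem'
    rw [hu hmem', hcrv u hIcc]
  · rw [hcrv 0 ⟨ht0, le_rfl⟩]

lemma Jf_lower (D : GoodData d) (ht0 : t ≤ 0) {ψ : Mspace d}
    (hFc : Continuous (Fcal D (d := d))) {CF CU : ℝ}
    (hCFb : ∀ σ : Mspace d, |Fcal D σ| ≤ CF) (hCUb : ∀ σ : Mspace d, |U0cal D σ| ≤ CU)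
    (w : Wsp d t) : -((0 - t) * CF + CU) ≤ Jf D t ψ w := by
  rw [Jf_split D ht0 hFc w]
  have hII := fcal_intervalIntegrable D ht0 (ψ := ψ) hFc w
  have h1 : |∫ s in t..0, Fcal D (crvW t ψ w s)| ≤ (0 - t) * CF := by
    refine (intervalIntegral.abs_integral_le_integral_abs ht0).trans ?_
    have hm := intervalIntegral.integral_mono_on (f := fun s => |Fcal D (crvW t ψ w s)|)
      (g := fun _ => CF) ht0 hII.abs intervalIntegrable_const
      (fun s _ => hCFb (crvW t ψ w s))
    simpa [intervalIntegral.integral_const, smul_eq_mul] using hm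
  have h2 := abs_le.mp h1
  have h3 := abs_le.mp (hCUb (crvW t ψ w 0))
  have h4 : 0 ≤ (1/2) * ‖w‖^2 := by positivity
  linarith

lemma Jf_conv (D : GoodData d) (ht0 : t ≤ 0) {ψ : Mspace d}
    (hFc : Continuous (Fcal D (d := d))) {CF CU T : ℝ}
    (hCF0 : 0 ≤ CF) (hCU0 : 0 ≤ CU) (hT0 : 0 ≤ T) (h0T : 0 - t ≤ T)
    (hCFq : ∀ σ τ : Mspace d,
      Fcal D σ + Fcal D τ - 2 * Fcal D ((2:ℝ)⁻¹ • (σ + τ)) ≤ CF * ‖σ - τ‖ ^ 2)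
    (hCUq : ∀ σ τ : Mspace d,
      2 * U0cal D ((2:ℝ)⁻¹ • (σ + τ)) - U0cal D σ - U0cal D τ ≤ CU * ‖σ - τ‖ ^ 2)
    (w v : Wsp d t) :
    (1/4 - CF * T^2 - CU * T) * ‖w - v‖^2 ≤
      Jf D t ψ w + Jf D t ψ v - 2 * Jf D t ψ ((2:ℝ)⁻¹ • (w + v)) := by
  set m : Wsp d t := (2:ℝ)⁻¹ • (w + v) with hm
  set X : ℝ := ‖w - v‖^2 with hX
  have hXnn : 0 ≤ X := sq_nonneg _
  rw [Jf_split D ht0 hFc w, Jf_split D ht0 hFc v, Jf_split D ht0 hFc m]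
  -- kinetic identity
  have hmn : ‖m‖ = 2⁻¹ * ‖w + v‖ := by
    rw [hm, norm_smul]
    simp
  have hpar : ‖w + v‖^2 + ‖w - v‖^2 = 2 * (‖w‖^2 + ‖v‖^2) := by
    have := parallelogram_law_with_norm ℝ w v
    simp only [pow_two]
    linarith
  have hkin : (1/2) * ‖w‖^2 + (1/2) * ‖v‖^2 - 2 * ((1/2) * ‖m‖^2) = (1/4) * X := by
    have hm2 : ‖m‖^2 = (1/4) * ‖w + v‖^2 := by rw [hmn]; ring
    rw [hm2, hX]
    linarith
  -- potential part
  have hFpt : ∀ s ∈ Icc t (0:ℝ),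
      Fcal D (crvW t ψ w s) + Fcal D (crvW t ψ v s) - 2 * Fcal D (crvW t ψ m s) ≤
        CF * (T * X) := by
    intro s hs
    rw [crv_mid ht0 hs w v]
    refine (hCFq (crvW t ψ w s) (crvW t ψ v s)).trans ?_
    have hcds := curve_diff_sq_le ht0 (ψ := ψ) hs w v h0T
    calc CF * ‖crvW t ψ w s - crvW t ψ v s‖^2 ≤ CF * (T * ‖w - v‖^2) :=
        mul_le_mul_of_nonneg_left hcds hCF0
      _ = CF * (T * X) := by rw [hX]
  have hIw := fcal_intervalIntegrable D ht0 (ψ := ψ) hFc w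
  have hIv := fcal_intervalIntegrable D ht0 (ψ := ψ) hFc v
  have hIm := fcal_intervalIntegrable D ht0 (ψ := ψ) hFc m
  have hFint : (∫ s in t..0, Fcal D (crvW t ψ w s)) + (∫ s in t..0, Fcal D (crvW t ψ v s))
      - 2 * (∫ s in t..0, Fcal D (crvW t ψ m s)) ≤ CF * T^2 * X := by
    have hsplit : (∫ s in t..0, Fcal D (crvW t ψ w s)) + (∫ s in t..0, Fcal D (crvW t ψ v s))
        - 2 * (∫ s in t..0, Fcal D (crvW t ψ m s)) =
        ∫ s in t..0, (Fcal D (crvW t ψ w s) + Fcal D (crvW t ψ v s)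
          - 2 * Fcal D (crvW t ψ m s)) := by
      rw [intervalIntegral.integral_sub (hIw.add hIv) (hIm.const_mul 2),
        intervalIntegral.integral_add hIw hIv, intervalIntegral.integral_const_mul]
    rw [hsplit]
    have hmono := intervalIntegral.integral_mono_on
      (f := fun s => Fcal D (crvW t ψ w s) + Fcal D (crvW t ψ v s)
        - 2 * Fcal D (crvW t ψ m s)) (g := fun _ => CF * (T * X)) ht0
      ((hIw.add hIv).sub (hIm.const_mul 2)) intervalIntegrable_const hFpt
    rw [intervalIntegral.integral_const, smul_eq_mul] at hmono
    refine hmono.trans ?_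
    have h1 : (0 - t) * (CF * (T * X)) ≤ T * (CF * (T * X)) := by
      have : 0 ≤ CF * (T * X) := by positivity
      nlinarith
    nlinarith [h1]
  -- final potential
  have hUpt : 2 * U0cal D (crvW t ψ m 0) - U0cal D (crvW t ψ w 0)
      - U0cal D (crvW t ψ v 0) ≤ CU * (T * X) := by
    rw [crv_mid ht0 ⟨ht0, le_rfl⟩ w v]
    refine (hCUq (crvW t ψ w 0) (crvW t ψ v 0)).trans ?_
    have hcds := curve_diff_sq_le ht0 (ψ := ψ) ⟨ht0, le_rfl⟩ w v h0T
    calc CU * ‖crvW t ψ w 0 - crvW t ψ v 0‖^2 ≤ CU * (T * ‖w - v‖^2) :=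
        mul_le_mul_of_nonneg_left hcds hCU0
      _ = CU * (T * X) := by rw [hX]
  have hCUT : CU * (T * X) = CU * T * X := by ring
  have hgoal : (1/4 - CF * T^2 - CU * T) * X = 1/4 * X - CF * T^2 * X - CU * T * X := by
    ring
  rw [hgoal]
  linarith [hkin, hFint, hUpt]

lemma Jf_cont (D : GoodData d) (ht0 : t ≤ 0) {ψ : Mspace d}
    (hFc : Continuous (Fcal D (d := d))) {CF CU : ℝ}
    (hCF0 : 0 ≤ CF) (hCU0 : 0 ≤ CU) (h01 : 0 - t ≤ 1)
    (hCFl : ∀ σ τ : Mspace d, |Fcal D σ - Fcal D τ| ≤ CF * ‖σ - τ‖)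
    (hCUl : ∀ σ τ : Mspace d, |U0cal D σ - U0cal D τ| ≤ CU * ‖σ - τ‖)
    (w v : Wsp d t) :
    |Jf D t ψ w - Jf D t ψ v| ≤ ((1/2) * (‖w‖ + ‖v‖) + CF + CU) * ‖w - v‖ := by
  rw [Jf_split D ht0 hFc w, Jf_split D ht0 hFc v]
  have hwv : 0 ≤ ‖w - v‖ := norm_nonneg _
  -- curve distance bound
  have hcd : ∀ s ∈ Icc t (0:ℝ), ‖crvW t ψ w s - crvW t ψ v s‖ ≤ ‖w - v‖ := by
    intro s hs
    rw [crv_sub ht0 hs w v]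
    have := curve_diff_le ht0 hs (w - v) h01
    rwa [Real.sqrt_one, one_mul] at this
  -- kinetic part
  have hk : |(1/2) * ‖w‖^2 - (1/2) * ‖v‖^2| ≤ (1/2) * (‖w‖ + ‖v‖) * ‖w - v‖ := by
    have h1 : (1/2) * ‖w‖^2 - (1/2) * ‖v‖^2 = (1/2) * (‖w‖ + ‖v‖) * (‖w‖ - ‖v‖) := by ring
    rw [h1, abs_mul]
    have h4 : (0:ℝ) ≤ (1/2) * (‖w‖ + ‖v‖) :=
      mul_nonneg (by norm_num) (add_nonneg (norm_nonneg _) (norm_nonneg _))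
    rw [abs_of_nonneg h4]
    have h3 : |‖w‖ - ‖v‖| ≤ ‖w - v‖ := abs_norm_sub_norm_le w v
    exact mul_le_mul_of_nonneg_left h3 h4
  -- Fcal part
  have hIw := fcal_intervalIntegrable D ht0 (ψ := ψ) hFc w
  have hIv := fcal_intervalIntegrable D ht0 (ψ := ψ) hFc v
  have hF : |(∫ s in t..0, Fcal D (crvW t ψ w s)) - ∫ s in t..0, Fcal D (crvW t ψ v s)|
      ≤ CF * ‖w - v‖ := by
    rw [← intervalIntegral.integral_sub hIw hIv]
    refine (intervalIntegral.abs_integral_le_integral_abs ht0).trans ?_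
    have hm := intervalIntegral.integral_mono_on
      (f := fun s => |Fcal D (crvW t ψ w s) - Fcal D (crvW t ψ v s)|)
      (g := fun _ => CF * ‖w - v‖) ht0 (hIw.sub hIv).abs intervalIntegrable_const
      (fun s hs => by
        refine (hCFl _ _).trans ?_
        exact mul_le_mul_of_nonneg_left (hcd s hs) hCF0)
    rw [intervalIntegral.integral_const, smul_eq_mul] at hm
    refine hm.trans ?_
    have : 0 ≤ CF * ‖w - v‖ := by positivity
    nlinarith
  have hU : |U0cal D (crvW t ψ w 0) - U0cal D (crvW t ψ v 0)| ≤ CU * ‖w - v‖ := by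
    refine (hCUl _ _).trans ?_
    exact mul_le_mul_of_nonneg_left (hcd 0 ⟨ht0, le_rfl⟩) hCU0
  have ek := abs_le.mp hk
  have eF := abs_le.mp hF
  have eU := abs_le.mp hU
  have hsum : ((1/2) * (‖w‖ + ‖v‖) + CF + CU) * ‖w - v‖ =
      (1/2) * (‖w‖ + ‖v‖) * ‖w - v‖ + CF * ‖w - v‖ + CU * ‖w - v‖ := by ring
  rw [abs_le, hsum]
  constructor <;> linarith

lemma exists_unique_Jmin (D : GoodData d) (ht0 : t ≤ 0) (ψ : Mspace d)
    (hFc : Continuous (Fcal D (d := d))) {CF CU : ℝ}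
    (hCF0 : 0 ≤ CF) (hCU0 : 0 ≤ CU) (h01 : 0 - t ≤ 1)
    (hCFb : ∀ σ : Mspace d, |Fcal D σ| ≤ CF) (hCUb : ∀ σ : Mspace d, |U0cal D σ| ≤ CU)
    (hCFl : ∀ σ τ : Mspace d, |Fcal D σ - Fcal D τ| ≤ CF * ‖σ - τ‖)
    (hCUl : ∀ σ τ : Mspace d, |U0cal D σ - U0cal D τ| ≤ CU * ‖σ - τ‖)
    (hconv : ∀ w v : Wsp d t, (1/8) * ‖w - v‖^2 ≤
      Jf D t ψ w + Jf D t ψ v - 2 * Jf D t ψ ((2:ℝ)⁻¹ • (w + v))) :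
    ∃ w : Wsp d t, (∀ v, Jf D t ψ w ≤ Jf D t ψ v) ∧
      (∀ v, (∀ x, Jf D t ψ v ≤ Jf D t ψ x) → v = w) := by
  haveI := Ioc_fin t (0:ℝ)
  set S : Set ℝ := Set.range (Jf D t ψ) with hS
  have hne : S.Nonempty := ⟨Jf D t ψ 0, ⟨0, rfl⟩⟩
  have hbdd : BddBelow S := by
    refine ⟨-((0 - t) * CF + CU), fun a ha => ?_⟩
    obtain ⟨x, rfl⟩ := ha
    exact Jf_lower D ht0 hFc hCFb hCUb x
  set mv : ℝ := sInf S with hmv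
  have hm_le : ∀ v, mv ≤ Jf D t ψ v := fun v => csInf_le hbdd ⟨v, rfl⟩
  have hseq : ∀ n : ℕ, ∃ u : Wsp d t, Jf D t ψ u < mv + 1/(n+1) := by
    intro n
    have hlt : mv < mv + 1/(n+1) := by
      have : (0:ℝ) < 1/(n+1) := by positivity
      linarith
    obtain ⟨x, hxS, hx⟩ := (csInf_lt_iff hbdd hne).mp hlt
    obtain ⟨u, rfl⟩ := hxS
    exact ⟨u, hx⟩
  choose u hu using hseq
  -- Cauchy
  have hdist : ∀ (N n n' : ℕ), N ≤ n → N ≤ n' →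
      dist (u n) (u n') ≤ Real.sqrt (16/(N+1)) := by
    intro N n n' hn hn'
    have h1 := hconv (u n) (u n')
    have h2 := hm_le ((2:ℝ)⁻¹ • (u n + u n'))
    have h3 : (1:ℝ)/(n+1) ≤ 1/(N+1) := by
      apply one_div_le_one_div_of_le
      · positivity
      · have : (N:ℝ) ≤ n := Nat.cast_le.mpr hn
        linarith
    have h4 : (1:ℝ)/(n'+1) ≤ 1/(N+1) := by
      apply one_div_le_one_div_of_le
      · positivity
      · have : (N:ℝ) ≤ n' := Nat.cast_le.mpr hn'
        linarith
    have h5 : ‖u n - u n'‖^2 ≤ 16/(N+1) := by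
      have e1 := hu n
      have e2 := hu n'
      have h16 : (16:ℝ)/(N+1) = 16 * (1/(N+1)) := by ring
      linarith
    rw [dist_eq_norm]
    rw [Real.le_sqrt (norm_nonneg _) (by positivity)]
    exact h5
  have hb0 : Tendsto (fun N : ℕ => Real.sqrt (16/(N+1))) atTop (𝓝 0) := by
    have h1 : Tendsto (fun N : ℕ => (16:ℝ)/(N+1)) atTop (𝓝 0) := by
      have := tendsto_one_div_add_atTop_nhds_zero_nat.const_mul (16:ℝ)
      simpa [div_eq_mul_inv, mul_comm] using this
    have h2 := (Real.continuous_sqrt.tendsto 0).comp h1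
    simpa only [Function.comp_def, Real.sqrt_zero] using h2
  have hcauchy : CauchySeq u := cauchySeq_of_le_tendsto_0 _
    (fun n n' N hn hn' => hdist N n n' hn hn') hb0
  obtain ⟨wstar, hlim⟩ := cauchySeq_tendsto_of_complete hcauchy
  -- J wstar = mv
  have hd0 : Tendsto (fun n => ‖wstar - u n‖) atTop (𝓝 0) := by
    have h1 : Tendsto (fun n => ‖u n - wstar‖) atTop (𝓝 0) :=
      tendsto_iff_norm_sub_tendsto_zero.mp hlim
    refine h1.congr fun n => ?_
    rw [norm_sub_rev]
  have hnorm : Tendsto (fun n => ‖u n‖) atTop (𝓝 ‖wstar‖) := hlim.norm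
  have hstep : ∀ n : ℕ, Jf D t ψ wstar ≤
      (mv + 1/(n+1)) + ((1/2) * (‖wstar‖ + ‖u n‖) + CF + CU) * ‖wstar - u n‖ := by
    intro n
    have h1 := Jf_cont D ht0 (ψ := ψ) hFc hCF0 hCU0 h01 hCFl hCUl wstar (u n)
    have h2 := abs_le.mp h1
    have h3 := (hu n).le
    linarith
  have hRHS : Tendsto (fun n : ℕ =>
      (mv + 1/(n+1)) + ((1/2) * (‖wstar‖ + ‖u n‖) + CF + CU) * ‖wstar - u n‖)
      atTop (𝓝 ((mv + 0) + ((1/2) * (‖wstar‖ + ‖wstar‖) + CF + CU) * 0)) := by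
    refine Tendsto.add (Tendsto.add tendsto_const_nhds
      tendsto_one_div_add_atTop_nhds_zero_nat) ?_
    refine Tendsto.mul ?_ hd0
    refine Tendsto.add (Tendsto.add ?_ tendsto_const_nhds) tendsto_const_nhds
    exact (tendsto_const_nhds.add hnorm).const_mul _
  have hJm : Jf D t ψ wstar ≤ mv := by
    have := ge_of_tendsto hRHS (Eventually.of_forall hstep)
    simpa using this
  have hminstar : ∀ v, Jf D t ψ wstar ≤ Jf D t ψ v := fun v => hJm.trans (hm_le v)
  refine ⟨wstar, hminstar, ?_⟩
  intro v hv
  have h1 : Jf D t ψ v = Jf D t ψ wstar := le_antisymm (hv wstar) (hminstar v)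
  have h2 := hconv v wstar
  have h3 := hv ((2:ℝ)⁻¹ • (v + wstar))
  have h4 : ‖v - wstar‖^2 ≤ 0 := by nlinarith
  have h5 : ‖v - wstar‖ = 0 := by nlinarith [sq_nonneg ‖v - wstar‖, norm_nonneg (v - wstar)]
  exact sub_eq_zero.mp (norm_eq_zero.mp h5)

end MainCore

end AuxProof

/-- There is `T > 0` such that for every `t ∈ [−T,0]` and `ψ ∈ M` the infimum
defining `𝓤̂(t,ψ)` is attained, and the minimizing curve is unique (on `[t,0]`). -/
theorem short_time_existence_and_uniqueness_of_minimizers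
    (d : ℕ) (D : GoodData d) :
    ∃ T > (0:ℝ), ∀ t ∈ Icc (-T) (0:ℝ), ∀ ψ : Mspace d,
      (∃ σ σ' : ℝ → Mspace d, IsMinimizer D t ψ σ σ') ∧
      (∀ σ₁ σ₁' σ₂ σ₂' : ℝ → Mspace d,
        IsMinimizer D t ψ σ₁ σ₁' → IsMinimizer D t ψ σ₂ σ₂' →
        ∀ s ∈ Icc t (0:ℝ), σ₁ s = σ₂ s) := by
  obtain ⟨CF, hCF0, hCFb, hCFl, hCFq⟩ := fcal_facts D
  obtain ⟨CU, hCU0, hCUb, hCUl, hCUq⟩ := u0cal_facts D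
  have hFc : Continuous (Fcal D (d := d)) := cont_of_lip hCFl
  set T : ℝ := min 1 (1/(8*(CF+CU+1))) with hT
  have hT0 : 0 < T := lt_min one_pos (by positivity)
  have hT1 : T ≤ 1 := min_le_left _ _
  have hsmall : CF * T^2 + CU * T ≤ 1/8 := by
    have h2 : T ≤ 1/(8*(CF+CU+1)) := min_le_right _ _
    have hTnn := hT0.le
    have hsq : T^2 ≤ T := by nlinarith
    have hstep : (CF + CU) * T ≤ (CF + CU) * (1/(8*(CF+CU+1))) :=
      mul_le_mul_of_nonneg_left h2 (by linarith)
    have hlast : (CF + CU) * (1/(8*(CF+CU+1))) ≤ 1/8 := by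
      rw [mul_one_div, div_le_div_iff₀ (by linarith) (by norm_num)]
      linarith
    nlinarith
  refine ⟨T, hT0, fun t ht ψ => ?_⟩
  obtain ⟨hTt, ht0⟩ := ht
  have h01 : 0 - t ≤ 1 := by linarith
  have h0T : 0 - t ≤ T := by linarith
  haveI := Ioc_fin t (0:ℝ)
  have hconv : ∀ w v : Wsp d t, (1/8) * ‖w - v‖^2 ≤
      Jf D t ψ w + Jf D t ψ v - 2 * Jf D t ψ ((2:ℝ)⁻¹ • (w + v)) := by
    intro w v
    have h := Jf_conv D ht0 (ψ := ψ) hFc hCF0 hCU0 hT0.le h0T hCFq hCUq w v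
    have hX : (0:ℝ) ≤ ‖w - v‖^2 := sq_nonneg _
    nlinarith
  obtain ⟨wstar, hmin, huniq⟩ := exists_unique_Jmin D ht0 ψ hFc hCF0 hCU0 h01
    hCFb hCUb hCFl hCUl hconv
  constructor
  · refine ⟨crvW t ψ wstar, ⇑wstar, crv_isACOn ht0 wstar, crv_start wstar, ?_⟩
    intro η η' hAC hstart
    obtain ⟨v, hvcoe, hveq⟩ := action_repr D ht0 hAC hstart
    rw [hveq]
    exact hmin v
  · intro σ₁ σ₁' σ₂ σ₂' h1 h2 s hs
    obtain ⟨w₁, hw₁coe, hw₁eq⟩ := action_repr D ht0 h1.1 h1.2.1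
    obtain ⟨w₂, hw₂coe, hw₂eq⟩ := action_repr D ht0 h2.1 h2.2.1
    have hmin₁ : ∀ x, Jf D t ψ w₁ ≤ Jf D t ψ x := by
      intro x
      rw [← hw₁eq]
      exact h1.2.2 _ _ (crv_isACOn ht0 x) (crv_start x)
    have hmin₂ : ∀ x, Jf D t ψ w₂ ≤ Jf D t ψ x := by
      intro x
      rw [← hw₂eq]
      exact h2.2.2 _ _ (crv_isACOn ht0 x) (crv_start x)
    have he : w₁ = w₂ := by rw [huniq w₁ hmin₁, huniq w₂ hmin₂]
    have e1 : σ₁ s = ψ + ∫ u in t..s, σ₁' u := by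
      rw [h1.1.2.2 s hs, h1.2.1]
    have e2 : σ₂ s = ψ + ∫ u in t..s, σ₂' u := by
      rw [h2.1.2.2 s hs, h2.2.1]
    have f1 : ∫ u in t..s, (w₁ : ℝ → Mspace d) u = ∫ u in t..s, σ₁' u :=
      intervalIntegral.integral_congr_ae (ae_on_uIoc hs.1 hs.2 hw₁coe)
    have f2 : ∫ u in t..s, (w₂ : ℝ → Mspace d) u = ∫ u in t..s, σ₂' u :=
      intervalIntegral.integral_congr_ae (ae_on_uIoc hs.1 hs.2 hw₂coe)
    rw [e1, e2, ← f1, ← f2, he]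

end MFG
end
end

section
/- Let G : 𝓟(𝕋^d) → ℝ be strongly differentiable at μ̃ ∈ 𝓟(𝕋^d) and define Ḡ : 𝓟₂(ℝ^d) → ℝ by Ḡ(μ) = G(π_♯μ). Then Ḡ is strongly differentiable at every μ ∈ 𝓟₂(ℝ^d) with π_♯μ = μ̃; indeed, if ξ̃ ∈ L²_{μ̃}(𝕋^d,ℝ^d) is a strong derivative of G at μ̃, then ξ = ξ̃∘π ∈ L²_μ(ℝ^d,ℝ^d) is a strong derivative of Ḡ at μ. -/
open MeasureTheory Set Filter Topology
open scoped ENNReal RealInnerProductSpace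

noncomputable section

namespace MFG

lemma torusProj_continuous {d : ℕ} : Continuous (torusProj (d := d)) :=
  continuous_pi fun i => continuous_quotient_mk'.comp ((continuous_apply i).comp
    (PiLp.continuous_ofLp (p := 2) (β := fun _ : Fin d => ℝ)))

lemma torusProj_add {d : ℕ} (a b : Rd d) :
    torusProj (a + b) = torusProj a + torusProj b := by
  funext i
  show (((a + b) i : ℝ) : AddCircle (1:ℝ)) = (a i : ℝ) + (b i : ℝ)
  rw [PiLp.add_apply]
  push_cast
  rfl

/-- If `G : 𝓟(𝕋^d) → ℝ` is strongly differentiable at `μ̃` with strong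
derivative `ξ̃`, then `Ḡ(μ) = G(π_♯μ)` is strongly differentiable at every `μ ∈ 𝓟₂(ℝ^d)` with
`π_♯μ = μ̃`, with strong derivative `ξ = ξ̃∘π`. -/
theorem strong_differentiability_lifts (d : ℕ)
    (G : Measure (Td d) → ℝ) (μt : Measure (Td d)) (hμt : IsProbabilityMeasure μt)
    (ξt : Td d → Rd d) (hG : HasStrongDerivTd G μt ξt)
    (μ : Measure (Rd d)) (hμ : IsProb2 μ) (hproj : μ.map torusProj = μt) :
    HasStrongDerivRd (fun ν => G (ν.map torusProj)) μ (fun x => ξt (torusProj x)) := by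
  obtain ⟨hξ, k, hk, hbound⟩ := hG
  have hπ : Measurable (torusProj (d := d)) := torusProj_continuous.measurable
  constructor
  · rw [← hproj] at hξ
    exact (memLp_map_measure_iff hξ.aestronglyMeasurable hπ.aemeasurable).1 hξ
  refine ⟨k, hk, ?_⟩
  intro ν hν γ hγ
  obtain ⟨hγp, hγint, hγ1, hγ2⟩ := hγ
  set f : Rd d × Rd d → Td d × Rd d := fun p => (torusProj p.1, p.2) with hf
  have hfm : Measurable f := (hπ.comp measurable_fst).prodMk measurable_snd
  set γ' := γ.map f with hγ'
  have hγ'p : IsProbabilityMeasure γ' := Measure.isProbabilityMeasure_map hfm.aemeasurable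
  have h1 : γ'.map Prod.fst = μt := by
    rw [hγ', Measure.map_map measurable_fst hfm]
    have he : (Prod.fst ∘ f) = torusProj ∘ Prod.fst := rfl
    rw [he, ← Measure.map_map hπ measurable_fst, hγ1, hproj]
  have hadd : Measurable fun p : Rd d × Rd d => p.1 + p.2 :=
    measurable_fst.add measurable_snd
  have haddT : Measurable fun p : Td d × Rd d => p.1 + torusProj p.2 :=
    measurable_fst.add (hπ.comp measurable_snd)
  have h2 : γ'.map (fun p => p.1 + torusProj p.2) = ν.map torusProj := by
    rw [hγ', Measure.map_map haddT hfm]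
    have he : ((fun p : Td d × Rd d => p.1 + torusProj p.2) ∘ f)
        = torusProj ∘ (fun p : Rd d × Rd d => p.1 + p.2) := by
      funext p
      simp only [Function.comp_apply, hf]
      exact (torusProj_add p.1 p.2).symm
    rw [he, ← Measure.map_map hπ hadd, hγ2]
  have hsqm : AEStronglyMeasurable (fun p : Td d × Rd d => ‖p.2‖ ^ 2) γ' :=
    (measurable_snd.norm.pow measurable_const).aestronglyMeasurable
  have hint2 : Integrable (fun p : Td d × Rd d => ‖p.2‖ ^ 2) γ' := by
    rw [hγ', integrable_map_measure hsqm hfm.aemeasurable]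
    exact hγint
  have hγ'T : IsTransferTd γ' μt (ν.map torusProj) := ⟨hγ'p, hint2, h1, h2⟩
  have hνp : IsProbabilityMeasure (ν.map torusProj) := by
    have := hν.1
    exact Measure.isProbabilityMeasure_map hπ.aemeasurable
  have key := hbound (ν.map torusProj) hνp γ' hγ'T
  have hξfst : AEStronglyMeasurable (ξt ∘ Prod.fst) γ' :=
    (h1 ▸ hξ.aestronglyMeasurable).comp_aemeasurable measurable_fst.aemeasurable
  have hinnm : AEStronglyMeasurable (fun p : Td d × Rd d => ⟪ξt p.1, p.2⟫) γ' :=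
    hξfst.inner measurable_snd.aestronglyMeasurable
  have hI1 : ∫ p, ⟪ξt p.1, p.2⟫ ∂γ' = ∫ p, ⟪ξt (torusProj p.1), p.2⟫ ∂γ := by
    rw [hγ', integral_map hfm.aemeasurable hinnm]
  have hI2 : ∫ p, ‖p.2‖ ^ 2 ∂γ' = ∫ p : Rd d × Rd d, ‖p.2‖ ^ 2 ∂γ := by
    rw [hγ', integral_map hfm.aemeasurable hsqm]
  rw [hI1, hI2] at key
  simp only []
  rw [hproj]
  exact key


end MFG
end
end
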